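/- arXiv:1710.05731 — 10 statements merged into one kernel-verified Lean document; each statement's English description precedes it below -/
import Mathlib

section
/- If T is an r-uniform hypergraph that can be built hyperedge-by-hyperedge with each new hyperedge intersecting the previous hypergraph in exactly one vertex, then T contains no Berge cycle. -/
/-- `IsTreeList r l` : the list of hyperedges `l` builds an `r`-uniform tree
hyperedge-by-hyperedge, each new hyperedge meeting the union of the previous
hyperedges in exactly one vertex. -/
inductive IsTreeList (r : ℕ) {V : Type*} [DecidableEq V] : List (Finset V) → Prop
  | single (e : Finset V) (he : e.card = r) : IsTreeList r [e]
  | cons (e : Finset V) (l : List (Finset V)) (hl : IsTreeList r l) (he : e.card = r)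
      (hint : (e ∩ l.foldr (· ∪ ·) ∅).card = 1) : IsTreeList r (e :: l)

/-- A Berge cycle in the hypergraph with hyperedge set `E`: distinct vertices
`v_1, …, v_k` and distinct hyperedges `e_1, …, e_k` (with `k ≥ 2`) such that
`v_i, v_{i+1} ∈ e_i` cyclically. -/
def IsBergeCycle {V : Type*} (E : Set (Finset V)) : Prop :=
  ∃ k : ℕ, ∃ v : Fin (k + 2) → V, Function.Injective v ∧
    ∃ e : Fin (k + 2) → Finset V, Function.Injective e ∧ (∀ i, e i ∈ E) ∧
      ∀ i : Fin (k + 2), v i ∈ e i ∧ v (i + 1) ∈ e i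

/-!
Adding a hyperedge `f` that shares at most one vertex with the existing hyperedges cannot create
a Berge cycle: a cycle through `f` enters and leaves it at two distinct vertices `v j`, `v (j + 1)`,
and both lie in neighbouring hyperedges of the cycle, which are distinct from `f` and hence old.
Induction along the construction of the tree then rules out every Berge cycle.
-/

section

variable {V : Type*}

theorem not_isBergeCycle_empty : ¬ IsBergeCycle (∅ : Set (Finset V)) :=
  fun ⟨_, _, _, _, _, hmem, _⟩ => hmem 0

theorem IsBergeCycle.of_insert {E : Set (Finset V)} {f : Finset V}
    (hf : ((f : Set V) ∩ ⋃ g ∈ E, (g : Set V)).Subsingleton)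
    (hc : IsBergeCycle (insert f E)) : IsBergeCycle E := by
  obtain ⟨k, v, hv, e, he, hmem, hcyc⟩ := hc
  by_cases hall : ∀ i, e i ∈ E
  · exact ⟨k, v, hv, e, he, hall, hcyc⟩
  exfalso
  obtain ⟨j, hj⟩ := not_forall.1 hall
  have hej : e j = f := (hmem j).resolve_right hj
  have mem_of_ne {i : Fin (k + 2)} (hi : i ≠ j) : e i ∈ E :=
    (hmem i).resolve_left fun h => hi (he (h.trans hej.symm))
  have hprev : e (j - 1) ∈ E := mem_of_ne (by simp)
  have hnext : e (j + 1) ∈ E := mem_of_ne (by simp)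
  have hvj : v j ∈ (f : Set V) ∩ ⋃ g ∈ E, (g : Set V) := by
    refine ⟨hej ▸ (hcyc j).1, Set.mem_biUnion hprev ?_⟩
    simpa using (hcyc (j - 1)).2
  have hvj' : v (j + 1) ∈ (f : Set V) ∩ ⋃ g ∈ E, (g : Set V) :=
    ⟨hej ▸ (hcyc j).2, Set.mem_biUnion hnext (hcyc (j + 1)).1⟩
  exact (by simp : j ≠ j + 1) (hv (hf hvj hvj'))

theorem List.coe_foldr_union [DecidableEq V] (l : List (Finset V)) :
    ((l.foldr (· ∪ ·) ∅ : Finset V) : Set V) = ⋃ g ∈ {e | e ∈ l}, (g : Set V) := by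
  induction l with
  | nil => simp
  | cons a t ih => simp [ih]

end

theorem stmt_2 (r : ℕ) {V : Type*} [DecidableEq V] (l : List (Finset V))
    (hl : IsTreeList r l) : ¬ IsBergeCycle {e | e ∈ l} := by
  induction hl with
  | single f _ =>
    simpa using mt (IsBergeCycle.of_insert (E := ∅) (f := f) (by simp)) not_isBergeCycle_empty
  | cons f t _ _ hint ih =>
    have hf : ((f : Set V) ∩ ⋃ g ∈ {e | e ∈ t}, (g : Set V)).Subsingleton := by
      rw [← List.coe_foldr_union, ← Finset.coe_inter, ← Finset.card_le_one_iff_subsingleton]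
      exact hint.le
    rw [List.setOfPred_mem_cons]
    exact mt (IsBergeCycle.of_insert hf) ih
end

section
/- If T is a connected r-uniform hypergraph in which the removal of any hyperedge (keeping all vertices) results in exactly r connected components, then between any two distinct vertices of T there exists a unique loose path. -/
/-- Reachability in a hypergraph: two vertices are related if they are joined by a
walk along hyperedges (equivalently, by a Berge path). -/
def hReach {V : Type*} (E : Set (Finset V)) : V → V → Prop :=
  Relation.ReflTransGen (fun a b => ∃ e ∈ E, a ∈ e ∧ b ∈ e)

/-- A hypergraph is connected if every two vertices are joined by a Berge path. -/
def hConn {V : Type*} (E : Set (Finset V)) : Prop := ∀ x y : V, hReach E x y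

/-- The number of connected components of the hypergraph with hyperedge set `E`. -/
noncomputable def compCount {V : Type*} (E : Set (Finset V)) : ℕ :=
  Set.ncard {C : Set V | ∃ x : V, C = {y | hReach E x y}}

/-- `IsLoosePathList E es x y` : the list of hyperedges `es` forms a loose path
from `x` to `y` in the hypergraph with hyperedge set `E`: consecutive hyperedges
meet in exactly one vertex, non-consecutive ones are disjoint, and all vertices
are distinct. -/
inductive IsLoosePathList {V : Type*} [DecidableEq V] (E : Set (Finset V)) :
    List (Finset V) → V → V → Prop
  | single (e : Finset V) (he : e ∈ E) (x y : V) (hx : x ∈ e) (hy : y ∈ e) (hxy : x ≠ y) :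
      IsLoosePathList E [e] x y
  | cons (e : Finset V) (he : e ∈ E) (x z y : V) (l : List (Finset V))
      (hl : IsLoosePathList E l z y) (hx : x ∈ e) (hxz : x ≠ z)
      (hint : e ∩ l.foldr (· ∪ ·) ∅ = {z}) : IsLoosePathList E (e :: l) x y

/-!
Removing an edge `e` leaves every vertex joined to some vertex of `e`, so the `r` components
of `E \ {e}` are the classes of the `r` vertices of `e`: every edge is a bridge separating all
of its vertices. In particular two edges share at most one vertex, and a loose path from `x`
to `y` is obtained by walking backwards from `y` along a Berge walk, extending or cutting the
current path. Conversely each edge of a loose path from `x` to `y` separates `x` from `y`, so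
every loose path from `x` to `y` uses exactly the same edges, and a loose path is determined by
its set of edges and its starting vertex.
-/

section

open Finset

variable {V : Type*}

section Reachability

variable {E : Set (Finset V)} {e : Finset V} {a b : V}

theorem hReach_symm (h : hReach E a b) : hReach E b a := by
  have : Std.Symm (fun a b : V => ∃ e ∈ E, a ∈ e ∧ b ∈ e) :=
    ⟨fun _ _ ⟨e, he, ha, hb⟩ => ⟨e, he, hb, ha⟩⟩
  unfold hReach at *
  exact Std.Symm.symm _ _ h

theorem hReach_of_mem (he : e ∈ E) (ha : a ∈ e) (hb : b ∈ e) : hReach E a b :=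
  .single ⟨e, he, ha, hb⟩

theorem exists_mem_hReach_sdiff_singleton (hc : hConn E) (ha : a ∈ e) (x : V) :
    ∃ c ∈ e, hReach (E \ {e}) c x := by
  induction hc a x with
  | refl => exact ⟨a, ha, .refl⟩
  | tail _ hstep ih =>
    obtain ⟨c, hce, hcx⟩ := ih
    obtain ⟨f, hf, hbf, hxf⟩ := hstep
    by_cases hfe : f = e
    · exact ⟨_, hfe ▸ hxf, .refl⟩
    · exact ⟨c, hce, hcx.trans (hReach_of_mem (Set.mem_sdiff_singleton.2 ⟨hf, hfe⟩) hbf hxf)⟩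

/-- The map sending `c ∈ s` to its component is onto, so counting makes it injective. -/
theorem eq_of_hReach_of_compCount_eq_card [Finite V] {F : Set (Finset V)} {s : Finset V}
    (hcover : ∀ x, ∃ c ∈ s, hReach F c x) (hcard : compCount F = #s)
    (ha : a ∈ s) (hb : b ∈ s) (hab : hReach F a b) : a = b := by
  set cls : V → Set V := fun c => {y | hReach F c y}
  have cls_eq : ∀ {u v}, hReach F u v → cls u = cls v := fun huv => by
    ext w
    exact ⟨(hReach_symm huv).trans, huv.trans⟩
  have image_eq : cls '' (s : Set V) = {C : Set V | ∃ x : V, C = cls x} := by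
    ext C
    constructor
    · rintro ⟨c, -, rfl⟩
      exact ⟨c, rfl⟩
    · rintro ⟨x, rfl⟩
      obtain ⟨c, hcs, hcx⟩ := hcover x
      exact ⟨c, hcs, cls_eq hcx⟩
  have hinj : Set.InjOn cls s := Set.injOn_of_ncard_image_eq
    (by rw [image_eq, Set.ncard_coe_finset]; exact hcard) (Set.toFinite _)
  exact hinj ha hb (cls_eq hab)

end Reachability

def IsHyperbridge (E : Set (Finset V)) (e : Finset V) : Prop :=
  ∀ a ∈ e, ∀ b ∈ e, hReach (E \ {e}) a b → a = b

theorem isHyperbridge_of_compCount_eq_card [Finite V] {E : Set (Finset V)} {e : Finset V}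
    (hc : hConn E) (hcomp : compCount (E \ {e}) = #e) : IsHyperbridge E e :=
  fun _ ha _ hb => eq_of_hReach_of_compCount_eq_card (exists_mem_hReach_sdiff_singleton hc ha)
    hcomp ha hb

variable [DecidableEq V] {E : Set (Finset V)}

def IsLinear (E : Set (Finset V)) : Prop :=
  ∀ e ∈ E, ∀ f ∈ E, e ≠ f → #(e ∩ f) ≤ 1

theorem isLinear_of_forall_isHyperbridge (h : ∀ e ∈ E, IsHyperbridge E e) : IsLinear E :=
  fun _ he f hf hef => card_le_one.2 fun a ha b hb =>
    h f hf a (mem_inter.1 ha).2 b (mem_inter.1 hb).2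
      (hReach_of_mem (Set.mem_sdiff_singleton.2 ⟨he, hef⟩) (mem_inter.1 ha).1 (mem_inter.1 hb).1)

theorem IsLinear.inter_eq_singleton (hE : IsLinear E) {e f : Finset V} (he : e ∈ E) (hf : f ∈ E)
    (hef : e ≠ f) {w : V} (hw : w ∈ e ∩ f) : e ∩ f = {w} :=
  eq_singleton_iff_unique_mem.2 ⟨hw, fun _ hv => card_le_one.1 (hE e he f hf hef) _ hv _ hw⟩

theorem mem_foldr_union {a : V} {l : List (Finset V)} :
    a ∈ l.foldr (· ∪ ·) ∅ ↔ ∃ s ∈ l, a ∈ s := by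
  induction l with
  | nil => simp
  | cons _ _ ih => simp [ih]

theorem mem_of_inter_eq_singleton {e s : Finset V} {z : V} (hint : e ∩ s = {z}) :
    z ∈ e ∧ z ∈ s :=
  mem_inter.1 (hint ▸ mem_singleton_self z)

namespace IsLoosePathList

variable {es : List (Finset V)} {x y : V}

theorem start_mem (h : IsLoosePathList E es x y) : x ∈ es.foldr (· ∪ ·) ∅ := by
  cases h with
  | single e _ _ _ hx => simpa using hx
  | cons e _ _ _ _ _ _ hx => exact mem_union_left _ hx

theorem start_notMem_tail {e : Finset V} {l : List (Finset V)} {z : V}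
    (hx : x ∈ e) (hxz : x ≠ z) (hint : e ∩ l.foldr (· ∪ ·) ∅ = {z}) :
    x ∉ l.foldr (· ∪ ·) ∅ := fun hxl =>
  hxz (mem_singleton.1 (hint ▸ mem_inter.2 ⟨hx, hxl⟩))

theorem head_notMem_tail {e : Finset V} {l : List (Finset V)} {z : V}
    (hx : x ∈ e) (hxz : x ≠ z) (hint : e ∩ l.foldr (· ∪ ·) ∅ = {z}) : e ∉ l := fun hel =>
  start_notMem_tail hx hxz hint (mem_foldr_union.2 ⟨e, hel, hx⟩)

theorem subset (h : IsLoosePathList E es x y) {e : Finset V} (he : e ∈ es) : e ∈ E := by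
  induction h with
  | single f hf => exact List.mem_singleton.1 he ▸ hf
  | cons f hf _ _ _ _ _ _ _ _ ih => exact (List.mem_cons.1 he).elim (· ▸ hf) ih

theorem ne_nil (h : IsLoosePathList E es x y) : es ≠ [] := by
  cases h <;> simp

theorem nodup (h : IsLoosePathList E es x y) : es.Nodup := by
  induction h with
  | single => exact List.nodup_singleton _
  | cons _ _ _ _ _ _ _ hx hxz hint ih => exact List.nodup_cons.2 ⟨head_notMem_tail hx hxz hint, ih⟩

theorem hReach_of_forall_mem {F : Set (Finset V)} (h : IsLoosePathList E es x y)
    (hF : ∀ e ∈ es, e ∈ F) : hReach F x y := by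
  induction h with
  | single e _ _ _ hx hy => exact hReach_of_mem (hF e (List.mem_singleton_self e)) hx hy
  | cons e _ _ _ _ _ _ hx _ hint ih =>
    refine .trans (hReach_of_mem (hF e List.mem_cons_self) hx ?_)
      (ih fun g hg => hF g (List.mem_cons_of_mem _ hg))
    exact (mem_of_inter_eq_singleton hint).1

theorem hReach_sdiff_singleton (h : IsLoosePathList E es x y) {g : Finset V} (hg : g ∉ es) :
    hReach (E \ {g}) x y :=
  h.hReach_of_forall_mem fun _ hf => ⟨h.subset hf, fun hfg => hg (hfg ▸ hf)⟩

theorem not_hReach_sdiff_singleton (hbr : ∀ e ∈ E, IsHyperbridge E e)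
    (h : IsLoosePathList E es x y) {g : Finset V} (hg : g ∈ es) : ¬ hReach (E \ {g}) x y := by
  induction h with
  | single e he x y hx hy hxy =>
    obtain rfl := List.mem_singleton.1 hg
    exact fun hxy' => hxy (hbr g he x hx y hy hxy')
  | cons e he x z y l hl hx hxz hint ih =>
    have hz : z ∈ e := (mem_of_inter_eq_singleton hint).1
    have hel : e ∉ l := head_notMem_tail hx hxz hint
    intro hxy'
    rcases List.mem_cons.1 hg with rfl | hgl
    · exact hxz (hbr g he x hx z hz (hxy'.trans (hReach_symm (hl.hReach_sdiff_singleton hel))))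
    · have hxz' : hReach (E \ {g}) x z :=
        hReach_of_mem ⟨he, fun heg => hel (heg ▸ hgl)⟩ hx hz
      exact ih hgl ((hReach_symm hxz').trans hxy')

theorem exists_of_mem_foldr_union {z : V} (h : IsLoosePathList E es z y)
    (hx : x ∈ es.foldr (· ∪ ·) ∅) (hxy : x ≠ y) : ∃ es', IsLoosePathList E es' x y := by
  induction h with
  | single f hf _ y _ hy => exact ⟨[f], .single f hf x y (by simpa using hx) hy hxy⟩
  | cons f hf _ z' y l hl _ _ hint ih =>
    by_cases hxl : x ∈ l.foldr (· ∪ ·) ∅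
    · exact ih hxl hxy
    · have hxf : x ∈ f := (mem_union.1 hx).resolve_right hxl
      have hxz' : x ≠ z' := fun h => hxl (h ▸ (mem_of_inter_eq_singleton hint).2)
      exact ⟨f :: l, .cons f hf x z' y l hl hxf hxz' hint⟩

theorem cons_of_isLinear (hE : IsLinear E) {e f : Finset V} {l : List (Finset V)} {w : V}
    (h : IsLoosePathList E (f :: l) w y) (he : e ∈ E) (hx : x ∈ e)
    (hxU : x ∉ (f :: l).foldr (· ∪ ·) ∅) (hw : w ∈ e) (hel : e ∩ l.foldr (· ∪ ·) ∅ = ∅) :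
    IsLoosePathList E (e :: f :: l) x y := by
  have hwU := h.start_mem
  have hwf : w ∈ f := (mem_union.1 hwU).resolve_right fun hwl =>
    notMem_empty w (hel ▸ mem_inter.2 ⟨hw, hwl⟩)
  have hef : e ≠ f := fun hef => hxU (mem_union_left _ (hef ▸ hx))
  have hint : e ∩ (f :: l).foldr (· ∪ ·) ∅ = {w} := by
    rw [List.foldr_cons, inter_union_distrib_left, hel, union_empty,
      hE.inter_eq_singleton he (h.subset List.mem_cons_self) hef (mem_inter.2 ⟨hw, hwf⟩)]
  exact .cons e he x w y (f :: l) h hx (fun hxw => hxU (hxw ▸ hwU)) hint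

theorem exists_of_isLinear_of_inter_nonempty (hE : IsLinear E) {z : V}
    (h : IsLoosePathList E es z y) {e : Finset V} (he : e ∈ E) (hx : x ∈ e)
    (hxU : x ∉ es.foldr (· ∪ ·) ∅) (hye : y ∉ e)
    (hmeet : (e ∩ es.foldr (· ∪ ·) ∅).Nonempty) : ∃ es', IsLoosePathList E es' x y := by
  induction h with
  | single f hf _ y _ hy =>
    obtain ⟨w, hw⟩ := hmeet
    obtain ⟨hwe, hwf⟩ := mem_inter.1 hw
    replace hwf : w ∈ f := by simpa using hwf
    have hwy : w ≠ y := fun hwy => hye (hwy ▸ hwe)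
    exact ⟨_, cons_of_isLinear hE (.single f hf w y hwf hy hwy) he hx hxU hwe (by simp)⟩
  | cons f hf _ z' y l hl _ _ hint ih =>
    have hxl : x ∉ l.foldr (· ∪ ·) ∅ := fun hxl => hxU (mem_union_right _ hxl)
    by_cases hmeet_tail : (e ∩ l.foldr (· ∪ ·) ∅).Nonempty
    · exact ih hxl hye hmeet_tail
    rw [not_nonempty_iff_eq_empty] at hmeet_tail
    obtain ⟨w, hw⟩ := hmeet
    rw [List.foldr_cons, inter_union_distrib_left, hmeet_tail, union_empty] at hw
    obtain ⟨hwe, hwf⟩ := mem_inter.1 hw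
    have hwz' : w ≠ z' := fun hwz' =>
      notMem_empty w (hmeet_tail ▸ mem_inter.2 ⟨hwe, hwz' ▸ (mem_of_inter_eq_singleton hint).2⟩)
    exact ⟨_, cons_of_isLinear hE (.cons f hf w z' y l hl hwf hwz' hint) he hx hxU hwe hmeet_tail⟩

theorem exists_of_hReach (hE : IsLinear E) (h : hReach E x y) (hxy : x ≠ y) :
    ∃ es, IsLoosePathList E es x y := by
  induction h using Relation.ReflTransGen.head_induction_on with
  | refl => exact absurd rfl hxy
  | @head x c hstep _ ih =>
    obtain ⟨e, he, hxe, hce⟩ := hstep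
    by_cases hye : y ∈ e
    · exact ⟨[e], .single e he x y hxe hye hxy⟩
    obtain ⟨es, hes⟩ := ih fun hcy => hye (hcy ▸ hce)
    by_cases hxU : x ∈ es.foldr (· ∪ ·) ∅
    · exact hes.exists_of_mem_foldr_union hxU hxy
    · exact hes.exists_of_isLinear_of_inter_nonempty hE he hxe hxU hye
        ⟨c, mem_inter.2 ⟨hce, hes.start_mem⟩⟩

theorem eq_of_perm {fs : List (Finset V)} {y' : V} (h₁ : IsLoosePathList E es x y)
    (h₂ : IsLoosePathList E fs x y') (hp : es.Perm fs) : es = fs := by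
  induction h₁ generalizing fs with
  | single e => exact (List.perm_singleton.1 hp.symm).symm
  | cons e _ x z _ l hl hx hxz hint ih =>
    cases h₂ with
    | single => exact absurd (List.cons_eq_cons.1 (List.perm_singleton.1 hp)).2 hl.ne_nil
    | cons f _ _ w _ m hm hx' hxw hint' =>
      obtain rfl : e = f := (List.mem_cons.1 (hp.subset List.mem_cons_self)).resolve_right
        fun hem => start_notMem_tail hx' hxw hint' (mem_foldr_union.2 ⟨e, hem, hx⟩)
      have hlm : l.Perm m := hp.cons_inv
      have hunion : l.foldr (· ∪ ·) ∅ = m.foldr (· ∪ ·) ∅ := by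
        ext a
        simp only [mem_foldr_union, hlm.mem_iff]
      obtain rfl : z = w := singleton_injective (hint.symm.trans (hunion ▸ hint'))
      rw [ih hm hlm]

theorem subset_of_forall_isHyperbridge (hbr : ∀ e ∈ E, IsHyperbridge E e)
    {fs : List (Finset V)} (h₁ : IsLoosePathList E es x y) (h₂ : IsLoosePathList E fs x y) :
    es ⊆ fs := fun _ hg => by_contra fun hgf =>
  h₁.not_hReach_sdiff_singleton hbr hg (h₂.hReach_sdiff_singleton hgf)

theorem eq_of_forall_isHyperbridge (hbr : ∀ e ∈ E, IsHyperbridge E e) {fs : List (Finset V)}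
    (h₁ : IsLoosePathList E es x y) (h₂ : IsLoosePathList E fs x y) : es = fs :=
  h₁.eq_of_perm h₂ <| (List.perm_ext_iff_of_nodup h₁.nodup h₂.nodup).2 fun _ =>
    ⟨(h₁.subset_of_forall_isHyperbridge hbr h₂ ·), (h₂.subset_of_forall_isHyperbridge hbr h₁ ·)⟩

end IsLoosePathList

end

theorem stmt_4 (r : ℕ) {V : Type*} [Fintype V] [DecidableEq V] (E : Set (Finset V))
    (hu : ∀ e ∈ E, e.card = r) (hc : hConn E)
    (hcomp : ∀ e ∈ E, compCount (E \ {e}) = r) :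
    ∀ x y : V, x ≠ y → ∃! es : List (Finset V), IsLoosePathList E es x y := by
  intro x y hxy
  have hbr : ∀ e ∈ E, IsHyperbridge E e := fun e he =>
    isHyperbridge_of_compCount_eq_card hc ((hcomp e he).trans (hu e he).symm)
  obtain ⟨es, hes⟩ :=
    IsLoosePathList.exists_of_hReach (isLinear_of_forall_isHyperbridge hbr) (hc x y) hxy
  exact ⟨es, hes, fun fs hfs => hfs.eq_of_forall_isHyperbridge hbr hes⟩
end

section
/- For r-uniform hypergraphs H1 and H2 with c(H2) ≥ t(H1), the hypergraph Ramsey number satisfies R(H1, H2; r) ≥ (χ_w(H1) − 1)(c(H2) − 1) + t(H1). -/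
/-- `c(H)`: the order of a largest connected component of the hypergraph. -/
noncomputable def maxCompOrder {V : Type*} [Fintype V] (E : Set (Finset V)) : ℕ :=
  Finset.univ.sup fun x => Set.ncard {y | hReach E x y}

/-- A weak proper vertex coloring: no hyperedge is monochromatic. -/
def WeakProper {V : Type*} (E : Set (Finset V)) {k : ℕ} (C : V → Fin k) : Prop :=
  ∀ e ∈ E, ∃ x ∈ e, ∃ y ∈ e, C x ≠ C y

/-- `χ_w(H)`: the weak chromatic number. -/
noncomputable def chiW {V : Type*} (E : Set (Finset V)) : ℕ :=
  sInf {k | ∃ C : V → Fin k, WeakProper E C}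

/-- `t(H)`: the minimum size of a color class over all weak proper colorings of `H`
with `χ_w(H)` colors. -/
noncomputable def minClass {V : Type*} (E : Set (Finset V)) : ℕ :=
  sInf {m | ∃ C : V → Fin (chiW E), WeakProper E C ∧ ∃ i, m = Set.ncard {v | C v = i}}

/-- The hypergraph Ramsey number `R(H₁, H₂; r)`: least `p` such that every red/blue
coloring of the hyperedges of `K_p^{(r)}` contains a red copy of `H₁` or a blue copy
of `H₂`. -/
noncomputable def hRamsey2 {V1 V2 : Type*} [DecidableEq V1] [DecidableEq V2]
    (E1 : Set (Finset V1)) (E2 : Set (Finset V2)) : ℕ :=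
  sInf {p | ∀ c : Finset (Fin p) → Bool,
    (∃ f : V1 → Fin p, Function.Injective f ∧ ∀ e ∈ E1, c (e.image f) = true) ∨
    (∃ f : V2 → Fin p, Function.Injective f ∧ ∀ e ∈ E2, c (e.image f) = false)}

open Finset Function

section Ramsey

variable {α : Type*} [DecidableEq α]

def HasMonochromatic (c : Finset α → Bool) (r n : ℕ) (s : Finset α) : Prop :=
  ∃ b, ∃ u ⊆ s, n ≤ #u ∧ ∀ e ⊆ u, #e = r → c e = b

def stepUpBound (q : ℕ → ℕ) : ℕ → ℕ
  | 0 => 0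
  | k + 1 => q (stepUpBound q k) + 1

def ramseyBound : ℕ → ℕ → ℕ
  | 0, n => n
  | r + 1, n => stepUpBound (ramseyBound r) (2 * n)

def IsEndHomogeneous (c : Finset α → Bool) (r : ℕ) : List (α × Bool) → Prop
  | [] => True
  | (x, b) :: l =>
    (∀ e ⊆ (l.map Prod.fst).toFinset, #e = r → c (insert x e) = b) ∧ IsEndHomogeneous c r l

theorem exists_isEndHomogeneous {c : Finset α → Bool} {r : ℕ} {q : ℕ → ℕ}
    (hq : ∀ (c : Finset α → Bool) n s, q n ≤ #s → HasMonochromatic c r n s) :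
    ∀ (k : ℕ) (s : Finset α), stepUpBound q k ≤ #s → ∃ l : List (α × Bool), l.length = k ∧
      (l.map Prod.fst).Nodup ∧ (l.map Prod.fst).toFinset ⊆ s ∧ IsEndHomogeneous c r l
  | 0, _, _ => ⟨[], rfl, List.nodup_nil, by simp, trivial⟩
  | k + 1, s, hs => by
    obtain ⟨x, hx⟩ : s.Nonempty := card_pos.mp (by simp only [stepUpBound] at hs; omega)
    obtain ⟨b, u, hus, hu, hmono⟩ := hq (fun e => c (insert x e)) (stepUpBound q k) (s.erase x)
      (by simp only [stepUpBound] at hs; rw [card_erase_of_mem hx]; omega)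
    obtain ⟨l, hlen, hnodup, hsub, hl⟩ := exists_isEndHomogeneous hq k u hu
    have hxl : x ∉ (l.map Prod.fst).toFinset := fun h => notMem_erase x s (hus (hsub h))
    refine ⟨(x, b) :: l, by simp [hlen], ?_, ?_, fun e he => hmono e (he.trans hsub), hl⟩
    · exact List.nodup_cons.mpr ⟨by simpa using hxl, hnodup⟩
    · simpa [insert_subset_iff, hx] using hsub.trans (hus.trans (erase_subset x s))

theorem IsEndHomogeneous.apply_eq {c : Finset α → Bool} {r : ℕ} {b : Bool} :
    ∀ {l : List (α × Bool)}, IsEndHomogeneous c r l →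
      ∀ e ⊆ ((l.filter (·.2 = b)).map Prod.fst).toFinset, #e = r + 1 → c e = b
  | [], _, e, he, hcard => by simp_all
  | (x, β) :: l, ⟨hx, hl⟩, e, he, hcard => by
    by_cases htail : e ⊆ ((l.filter (·.2 = b)).map Prod.fst).toFinset
    · exact hl.apply_eq e htail hcard
    obtain ⟨y, hye, hy⟩ := not_subset.mp htail
    obtain ⟨rfl, rfl⟩ : y = x ∧ β = b := by
      have := he hye
      simp only [List.filter_cons, List.mem_toFinset] at this hy
      split_ifs at this with h <;> simp_all
    have hrest : e.erase y ⊆ (l.map Prod.fst).toFinset := by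
      have hfilter : ((l.filter (·.2 = β)).map Prod.fst).toFinset ⊆ (l.map Prod.fst).toFinset :=
        fun z hz => List.mem_toFinset.mpr
          ((List.filter_sublist.map _).subset (List.mem_toFinset.mp hz))
      simp only [List.filter_cons, decide_true, if_true, List.map_cons, List.toFinset_cons] at he
      exact (subset_insert_iff.mp he).trans hfilter
    have := hx _ hrest (by rw [card_erase_of_mem hye, hcard]; rfl)
    rwa [insert_erase hye] at this

theorem IsEndHomogeneous.hasMonochromatic {c : Finset α → Bool} {r n : ℕ} {s : Finset α}
    {l : List (α × Bool)} (hl : IsEndHomogeneous c r l) (hlen : l.length = 2 * n)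
    (hnodup : (l.map Prod.fst).Nodup) (hsub : (l.map Prod.fst).toFinset ⊆ s) :
    HasMonochromatic c (r + 1) n s := by
  obtain ⟨b, hb⟩ : ∃ b, n ≤ (l.filter (·.2 = b)).length := by
    have := List.length_eq_length_filter_add (l := l) (·.2)
    by_cases h : n ≤ (l.filter (·.2)).length
    · exact ⟨true, by simpa using h⟩
    · exact ⟨false, by simp only [Bool.decide_eq_false]; omega⟩
  have hsubl : ((l.filter (·.2 = b)).map Prod.fst).Sublist (l.map Prod.fst) :=
    List.filter_sublist.map _
  refine ⟨b, _, fun x hx => hsub ?_, ?_, hl.apply_eq⟩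
  · exact List.mem_toFinset.mpr (hsubl.subset (List.mem_toFinset.mp hx))
  · rwa [List.toFinset_card_of_nodup (hnodup.sublist hsubl), List.length_map]

theorem hasMonochromatic_of_ramseyBound_le (c : Finset α → Bool) :
    ∀ (r n : ℕ) (s : Finset α), ramseyBound r n ≤ #s → HasMonochromatic c r n s
  | 0, n, s, hs => by
    obtain ⟨u, hus, hu⟩ := exists_subset_card_eq hs
    exact ⟨c ∅, u, hus, hu.ge, fun e _ he => by rw [card_eq_zero.mp he]⟩
  | r + 1, n, s, hs => by
    obtain ⟨l, hlen, hnodup, hsub, hl⟩ := exists_isEndHomogeneous (c := c)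
      (fun c n s => hasMonochromatic_of_ramseyBound_le c r n s) (2 * n) s hs
    exact hl.hasMonochromatic hlen hnodup hsub

end Ramsey

section Arrows

variable {V1 V2 : Type*}

def Arrows (E1 : Set (Finset V1)) (E2 : Set (Finset V2)) (p : ℕ) : Prop :=
  ∀ c : Finset (Fin p) → Bool,
    (∃ f : V1 → Fin p, Injective f ∧ ∀ e ∈ E1, c (e.image f) = true) ∨
    (∃ f : V2 → Fin p, Injective f ∧ ∀ e ∈ E2, c (e.image f) = false)

theorem exists_injective_image_eq {V W : Type*} [Fintype V] [DecidableEq W]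
    {E : Set (Finset V)} {r : ℕ} (hE : ∀ e ∈ E, #e = r) {c : Finset W → Bool} {b : Bool}
    {u : Finset W} (hu : Fintype.card V ≤ #u) (hmono : ∀ e ⊆ u, #e = r → c e = b) :
    ∃ f : V → W, Injective f ∧ ∀ e ∈ E, c (e.image f) = b := by
  obtain ⟨f, hf⟩ := Embedding.exists_of_card_le_finset hu
  refine ⟨f, f.injective, fun e he => hmono _ ?_ ?_⟩
  · simpa [image_subset_iff] using fun x _ => hf (Set.mem_range_self x)
  · rw [card_image_of_injective e f.injective, hE e he]

theorem arrows_ramseyBound [Fintype V1] [Fintype V2] {E1 : Set (Finset V1)}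
    {E2 : Set (Finset V2)} {r : ℕ} (h1 : ∀ e ∈ E1, #e = r) (h2 : ∀ e ∈ E2, #e = r) :
    Arrows E1 E2 (ramseyBound r (max (Fintype.card V1) (Fintype.card V2))) := fun c => by
  obtain ⟨b, u, -, hu, hmono⟩ :=
    hasMonochromatic_of_ramseyBound_le c r (max (Fintype.card V1) (Fintype.card V2)) univ (by simp)
  cases b
  · exact .inr (exists_injective_image_eq h2 (le_of_max_le_right hu) hmono)
  · exact .inl (exists_injective_image_eq h1 (le_of_max_le_left hu) hmono)

theorem le_hRamsey2 [DecidableEq V1] [DecidableEq V2] {E1 : Set (Finset V1)}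
    {E2 : Set (Finset V2)} {m : ℕ} (hne : ∃ p, Arrows E1 E2 p)
    (h : ∀ p, Arrows E1 E2 p → m ≤ p) : m ≤ hRamsey2 E1 E2 :=
  le_csInf hne h

end Arrows

section WeakColoring

variable {V : Type*} {E : Set (Finset V)}

theorem WeakProper.of_comp {k m : ℕ} {C : V → Fin k} {φ : Fin k → Fin m}
    (h : WeakProper E (φ ∘ C)) : WeakProper E C := fun e he => by
  obtain ⟨x, hx, y, hy, hxy⟩ := h e he
  exact ⟨x, hx, y, hy, fun hC => hxy (congrArg φ hC)⟩

theorem chiW_le {k : ℕ} {C : V → Fin k} (hC : WeakProper E C) : chiW E ≤ k :=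
  Nat.sInf_le ⟨C, hC⟩

theorem exists_weakProper_chiW (hk : 0 < chiW E) : ∃ C : V → Fin (chiW E), WeakProper E C :=
  Nat.sInf_mem (Nat.nonempty_of_pos_sInf hk)

theorem chiW_lt_of_forall_ne {k : ℕ} {C : V → Fin k} (hC : WeakProper E C) (i : Fin k)
    (hi : ∀ v, C v ≠ i) : chiW E < k := by
  obtain ⟨m, rfl⟩ : ∃ m, k = m + 1 := Nat.exists_eq_succ_of_ne_zero i.pos.ne'
  choose C' hC' using fun v => Fin.exists_succAbove_eq (hi v)
  have hcomp : i.succAbove ∘ C' = C := funext hC'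
  exact (chiW_le (hcomp ▸ hC).of_comp).trans_lt m.lt_succ_self

theorem minClass_le {C : V → Fin (chiW E)} (hC : WeakProper E C) (i : Fin (chiW E)) :
    minClass E ≤ {v | C v = i}.ncard :=
  Nat.sInf_le ⟨C, hC, i, rfl⟩

theorem minClass_eq_zero_of_chiW_eq_zero (h : chiW E = 0) : minClass E = 0 := by
  refine Nat.sInf_eq_zero.mpr (.inr (Set.eq_empty_of_forall_notMem ?_))
  rintro m ⟨C, -, i, -⟩
  exact (h ▸ i).elim0

theorem minClass_pos [Finite V] (hk : 0 < chiW E) : 0 < minClass E := by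
  obtain ⟨C₀, hC₀⟩ := exists_weakProper_chiW hk
  obtain ⟨C, hC, i, hi⟩ : minClass E ∈ _ := Nat.sInf_mem ⟨_, C₀, hC₀, ⟨0, hk⟩, rfl⟩
  refine Nat.pos_of_ne_zero fun h0 => (chiW_lt_of_forall_ne hC i fun v hv => ?_).false
  have : {v | C v = i} = ∅ := (Set.ncard_eq_zero (Set.toFinite _)).mp (hi.symm.trans h0)
  exact this.subset hv

end WeakColoring

section Components

variable {V : Type*} {E : Set (Finset V)}

theorem hReach.apply_eq {β : Type*} {φ : V → β} (hφ : ∀ e ∈ E, ∀ x ∈ e, ∀ y ∈ e, φ x = φ y)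
    {x y : V} (h : hReach E x y) : φ x = φ y := by
  induction h with
  | refl => rfl
  | tail _ hstep ih =>
    obtain ⟨e, he, hb, hc⟩ := hstep
    exact ih.trans (hφ e he _ hb _ hc)

theorem maxCompOrder_lt_iff [Fintype V] {m : ℕ} (hm : 0 < m) :
    maxCompOrder E < m ↔ ∀ x, {y | hReach E x y}.ncard < m := by
  simp [maxCompOrder, Finset.sup_lt_iff hm]

theorem ncard_reach_le_ncard_fiber {W κ : Type*} [Finite W] {f : V → W} (hf : Injective f)
    {g : W → κ} (hg : ∀ e ∈ E, ∀ x ∈ e, ∀ y ∈ e, g (f x) = g (f y)) (x : V) :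
    {y | hReach E x y}.ncard ≤ {w | g w = g (f x)}.ncard := by
  rw [← Set.ncard_image_of_injective _ hf]
  refine Set.ncard_le_ncard ?_
  rintro _ ⟨y, hy, rfl⟩
  exact ((hReach.apply_eq hg hy).symm : g (f y) = g (f x))

end Components

theorem exists_fin_ncard_fiber_le {p k : ℕ} (s : Fin k → ℕ) (hp : p ≤ ∑ j, s j) :
    ∃ g : Fin p → Fin k, ∀ j, {v | g v = j}.ncard ≤ s j := by
  set σ : Fin p → (j : Fin k) × Fin (s j) := finSigmaFinEquiv.symm ∘ Fin.castLE hp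
  have hσ : Injective σ := finSigmaFinEquiv.symm.injective.comp (Fin.castLE_injective hp)
  refine ⟨fun v => (σ v).1, fun j => ?_⟩
  calc {v | (σ v).1 = j}.ncard ≤ (range (s j) : Set ℕ).ncard := by
        refine Set.ncard_le_ncard_of_injOn (fun v => (σ v).2) (fun v hv => ?_) ?_
        · rw [coe_range, Set.mem_Iio, ← show (σ v).1 = j from hv]
          exact (σ v).2.isLt
        intro v hv w hw hvw
        refine hσ (Sigma.ext (hv.trans hw.symm) ((Fin.heq_ext_iff ?_).mpr hvw))
        rw [show (σ v).1 = j from hv, show (σ w).1 = j from hw]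
    _ = s j := by simp

section SplitColoring

variable {W κ : Type*} [DecidableEq κ]

def splitColoring (g : W → κ) (s : Finset W) : Bool :=
  decide (∃ x ∈ s, ∃ y ∈ s, g x ≠ g y)

variable {V : Type*} [DecidableEq W] {E : Set (Finset V)} {f : V → W}

theorem weakProper_of_splitColoring {k : ℕ} {g : W → Fin k}
    (h : ∀ e ∈ E, splitColoring g (e.image f) = true) : WeakProper E (g ∘ f) := fun e he => by
  simpa [splitColoring] using h e he

theorem eq_of_splitColoring_eq_false {g : W → κ}
    (h : ∀ e ∈ E, splitColoring g (e.image f) = false) :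
    ∀ e ∈ E, ∀ x ∈ e, ∀ y ∈ e, g (f x) = g (f y) := fun e he => by
  simpa [splitColoring] using h e he

end SplitColoring

theorem not_arrows_of_lt {V1 V2 : Type*} [Fintype V1] [Fintype V2] {E1 : Set (Finset V1)}
    {E2 : Set (Finset V2)} (hk : 0 < chiW E1) (hct : minClass E1 ≤ maxCompOrder E2) {p : ℕ}
    (hp : p < (chiW E1 - 1) * (maxCompOrder E2 - 1) + minClass E1) : ¬ Arrows E1 E2 p := by
  intro harr
  have ht : 0 < minClass E1 := minClass_pos hk
  set i₀ : Fin (chiW E1) := ⟨0, hk⟩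
  obtain ⟨g, hg⟩ := exists_fin_ncard_fiber_le (p := p)
    (update (fun _ => maxCompOrder E2 - 1) i₀ (minClass E1 - 1)) (by
      simp only [mem_univ, sum_update_of_mem, sum_const, card_sdiff, card_univ, Fintype.card_fin,
        inter_univ, card_singleton, smul_eq_mul]
      omega)
  have hi₀ : {v | g v = i₀}.ncard < minClass E1 := (hg i₀).trans_lt (by rw [update_self]; omega)
  have hfiber (j) : {v | g v = j}.ncard < maxCompOrder E2 := by
    refine (hg j).trans_lt ?_
    by_cases h : j = i₀
    · rw [h, update_self]; omega
    · rw [update_of_ne h]; omega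
  rcases harr (splitColoring g) with ⟨f, hf, hred⟩ | ⟨f, hf, hblue⟩
  · have hpull : {v | g (f v) = i₀}.ncard ≤ {w | g w = i₀}.ncard := by
      rw [← Set.ncard_image_of_injective _ hf]
      exact Set.ncard_le_ncard (Set.image_preimage_subset f {w | g w = i₀})
    exact hi₀.not_ge ((minClass_le (weakProper_of_splitColoring hred) i₀).trans hpull)
  · refine lt_irrefl _ ((maxCompOrder_lt_iff (ht.trans_le hct)).mpr fun x => ?_)
    exact (ncard_reach_le_ncard_fiber hf (eq_of_splitColoring_eq_false hblue) x).trans_lt (hfiber _)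

theorem stmt_7 (r : ℕ) {V1 V2 : Type*} [Fintype V1] [DecidableEq V1]
    [Fintype V2] [DecidableEq V2] (E1 : Set (Finset V1)) (E2 : Set (Finset V2))
    (h1 : ∀ e ∈ E1, e.card = r) (h2 : ∀ e ∈ E2, e.card = r)
    (hct : minClass E1 ≤ maxCompOrder E2) :
    (chiW E1 - 1) * (maxCompOrder E2 - 1) + minClass E1 ≤ hRamsey2 E1 E2 := by
  -- `chiW E1 = 0` also when no weak proper colouring exists, since `sInf ∅ = 0`.
  rcases Nat.eq_zero_or_pos (chiW E1) with hk | hk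
  · simp [hk, minClass_eq_zero_of_chiW_eq_zero hk]
  refine le_hRamsey2 ⟨_, arrows_ramseyBound h1 h2⟩ fun p hp => ?_
  by_contra! hlt
  exact not_arrows_of_lt hk hct hlt hp
end

section
/- Let H' be a connected r-uniform hypergraph of order m − r + 1 ≥ r, and let H be obtained from H' by adding a free hyperedge (so H has order m). Then R(H, K_n^{(r)}; r) ≤ max{ R(H', K_n^{(r)}; r), R(H, K_{n−1}^{(r)}; r) + m − r + 1 }. -/
/-- `hRamseyOn r S E n` is the Ramsey number `R(H, K_n^{(r)}; r)` where `H` is the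
hypergraph with vertex set `S ⊆ V` and hyperedge set `E`. -/
noncomputable def hRamseyOn {V : Type*} [DecidableEq V] (r : ℕ) (S : Finset V)
    (E : Set (Finset V)) (n : ℕ) : ℕ :=
  sInf {p | ∀ c : Finset (Fin p) → Bool,
    (∃ f : V → Fin p, Set.InjOn f ↑S ∧ ∀ e ∈ E, c (e.image f) = true) ∨
    (∃ g : Fin n → Fin p, Function.Injective g ∧
      ∀ e : Finset (Fin n), e.card = r → c (e.image g) = false)}

namespace HypergraphRamsey

open Finset Function

variable {V W : Type*}

def HasRedCopy [DecidableEq W] (c : Finset W → Bool) (S : Finset V) (E : Set (Finset V)) : Prop :=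
  ∃ f : V → W, Set.InjOn f S ∧ ∀ e ∈ E, c (e.image f) = true

def HasBlueClique [DecidableEq W] (r : ℕ) (c : Finset W → Bool) (n : ℕ) : Prop :=
  ∃ g : Fin n → W, Injective g ∧ ∀ e : Finset (Fin n), e.card = r → c (e.image g) = false

def IsBlueClique (r : ℕ) (c : Finset W → Bool) (K : Finset W) : Prop :=
  ∀ s ⊆ K, s.card = r → c s = false

/-- `Arrows r S E n p` is the arrow relation `p → (H, K_n^{(r)})` for `H = (S, E)`. -/
def Arrows (r : ℕ) (S : Finset V) (E : Set (Finset V)) (n p : ℕ) : Prop :=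
  ∀ c : Finset (Fin p) → Bool, HasRedCopy c S E ∨ HasBlueClique r c n

theorem hRamseyOn_eq_sInf [DecidableEq V] (r : ℕ) (S : Finset V) (E : Set (Finset V)) (n : ℕ) :
    hRamseyOn r S E n = sInf {p | Arrows r S E n p} := rfl

section BlueClique

variable [DecidableEq W] {r n : ℕ} {c : Finset W → Bool} {K : Finset W}

theorem IsBlueClique.insert {v : W} (hK : IsBlueClique r c K)
    (hv : ∀ s ⊆ K, s.card = r - 1 → c (insert v s) = false) : IsBlueClique r c (insert v K) := by
  intro s hs hsr
  by_cases hvs : v ∈ s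
  · rw [← insert_erase hvs]
    exact hv _ (subset_insert_iff.mp hs) (by rw [card_erase_of_mem hvs, hsr])
  · exact hK s ((subset_insert_iff_of_notMem hvs).mp hs) hsr

theorem isBlueClique_image_univ {g : Fin n → W} (hg : Injective g)
    (hblue : ∀ e : Finset (Fin n), e.card = r → c (e.image g) = false) :
    IsBlueClique r c (univ.image g) := by
  intro s hs hsr
  obtain ⟨e, -, rfl⟩ := subset_image_iff.mp hs
  exact hblue e (by rwa [card_image_of_injective _ hg] at hsr)

theorem IsBlueClique.hasBlueClique (hK : IsBlueClique r c K) (hn : n ≤ K.card) :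
    HasBlueClique r c n := by
  obtain ⟨j⟩ : Nonempty (Fin n ↪ K) := Function.Embedding.nonempty_of_card_le (by simpa using hn)
  have hj : Injective (Subtype.val ∘ j) := Subtype.val_injective.comp j.injective
  refine ⟨Subtype.val ∘ j, hj, fun e he => hK _ ?_ (by rw [card_image_of_injective _ hj, he])⟩
  intro w hw
  obtain ⟨i, -, rfl⟩ := mem_image.mp hw
  exact (j i).2

theorem HasBlueClique.mono {k : ℕ} (h : HasBlueClique r c n) (hkn : k ≤ n) :
    HasBlueClique r c k := by
  obtain ⟨g, hg, hblue⟩ := h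
  exact (isBlueClique_image_univ hg hblue).hasBlueClique (by simpa [card_image_of_injective _ hg])

end BlueClique

section Arrows

variable [DecidableEq W] {r n p : ℕ} {S : Finset V} {E : Set (Finset V)}

theorem Arrows.exists_of_le_card (h : Arrows r S E n p) (c : Finset W → Bool) {T : Finset W}
    (hT : p ≤ T.card) : HasRedCopy c S E ∨ ∃ K ⊆ T, K.card = n ∧ IsBlueClique r c K := by
  obtain ⟨j⟩ : Nonempty (Fin p ↪ T) := Function.Embedding.nonempty_of_card_le (by simpa using hT)
  set ι : Fin p → W := Subtype.val ∘ j
  have hι : Injective ι := Subtype.val_injective.comp j.injective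
  rcases h (fun s => c (s.image ι)) with ⟨f, hf, hred⟩ | ⟨g, hg, hblue⟩
  · refine Or.inl ⟨ι ∘ f, hι.injOn.comp hf (Set.mapsTo_univ _ _), fun e he => ?_⟩
    rw [← image_image]
    exact hred e he
  · refine Or.inr ⟨univ.image (ι ∘ g), ?_, ?_, isBlueClique_image_univ (hι.comp hg) ?_⟩
    · intro w hw
      obtain ⟨i, -, rfl⟩ := mem_image.mp hw
      exact (j (g i)).2
    · simp [card_image_of_injective _ (hι.comp hg)]
    · intro e he
      rw [← image_image]
      exact hblue e he

theorem Arrows.sInf_mem (h : Arrows r S E n p) : Arrows r S E n (sInf {p | Arrows r S E n p}) :=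
  Nat.sInf_mem (s := {p | Arrows r S E n p}) ⟨p, h⟩

theorem Arrows.of_le {k : ℕ} (h : Arrows r S E n p) (hkn : k ≤ n) : Arrows r S E k p :=
  fun c => (h c).imp_right (·.mono hkn)

theorem Arrows.of_subgraph {T : Finset V} {F : Set (Finset V)} (h : Arrows r T F n p)
    (hST : S ⊆ T) (hEF : E ⊆ F) : Arrows r S E n p :=
  fun c => (h c).imp_left fun ⟨f, hf, hred⟩ =>
    ⟨f, hf.mono (coe_subset.mpr hST), fun e he => hred e (hEF he)⟩

end Arrows

section FreeEdge

variable [DecidableEq V] [DecidableEq W]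

theorem exists_extend_injOn {f : V → W} {S D : Finset V} {Y : Finset W} (hf : Set.InjOn f S)
    (hSD : Disjoint S D) (hY : Disjoint (S.image f) Y) (hcard : D.card = Y.card) :
    ∃ f' : V → W, Set.EqOn f' f S ∧ Set.InjOn f' (S ∪ D : Finset V) ∧ D.image f' = Y := by
  let σ : D ≃ Y := D.equivOfCardEq hcard
  let f' : V → W := fun v => if h : v ∈ D then σ ⟨v, h⟩ else f v
  have hS : Set.EqOn f' f S := fun v hv => dif_neg (disjoint_left.mp hSD hv)
  have hD : ∀ v (h : v ∈ D), f' v = σ ⟨v, h⟩ := fun v h => dif_pos h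
  refine ⟨f', hS, ?_, ?_⟩
  · rw [coe_union, Set.injOn_union (disjoint_coe.mpr hSD)]
    refine ⟨hf.congr hS.symm, fun a ha b hb hab => ?_, fun a ha b hb hab => ?_⟩
    · rw [hD a ha, hD b hb] at hab
      simpa using σ.injective (Subtype.ext hab)
    · rw [hS ha, hD b hb] at hab
      exact disjoint_left.mp hY (mem_image_of_mem f ha) (hab ▸ (σ _).2)
  · ext w
    refine ⟨fun hw => ?_, fun hw => mem_image.mpr ⟨σ.symm ⟨w, hw⟩, (σ.symm _).2, ?_⟩⟩
    · obtain ⟨v, hv, rfl⟩ := mem_image.mp hw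
      rw [hD v hv]
      exact (σ _).2
    · rw [hD _ (σ.symm _).2]
      simp

variable {r : ℕ} {S' e₀ : Finset V} {E' : Set (Finset V)} {x : V}

theorem mem_of_inter_eq_singleton (hx : e₀ ∩ S' = {x}) : x ∈ e₀ ∧ x ∈ S' :=
  mem_inter.mp (hx ▸ mem_singleton_self x)

theorem hasRedCopy_insert_free_edge {c : Finset W → Bool} (hsub : ∀ e ∈ E', e ⊆ S')
    (he₀ : e₀.card = r) (hx : e₀ ∩ S' = {x}) {f : V → W} (hf : Set.InjOn f S')
    (hred : ∀ e ∈ E', c (e.image f) = true) {Y : Finset W} (hY : Disjoint (S'.image f) Y)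
    (hYcard : Y.card = r - 1) (hYred : c (insert (f x) Y) = true) :
    HasRedCopy c (S' ∪ e₀) (insert e₀ E') := by
  obtain ⟨hxe₀, hxS⟩ := mem_of_inter_eq_singleton hx
  have hdisj : Disjoint S' (e₀.erase x) := disjoint_left.mpr fun v hvS hv =>
    ne_of_mem_erase hv (mem_singleton.mp (hx ▸ mem_inter.mpr ⟨mem_of_mem_erase hv, hvS⟩))
  obtain ⟨f', hf'S, hinj, himg⟩ :=
    exists_extend_injOn hf hdisj hY (by rw [card_erase_of_mem hxe₀, he₀, hYcard])
  have hunion : S' ∪ e₀.erase x = S' ∪ e₀ := by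
    conv_rhs => rw [← insert_erase hxe₀]
    rw [union_insert, insert_eq_of_mem (mem_union_left _ hxS)]
  refine ⟨f', hunion ▸ hinj, fun e he => ?_⟩
  rcases Set.mem_insert_iff.mp he with rfl | he
  · rw [← insert_erase hxe₀, image_insert, himg, hf'S hxS]
    exact hYred
  · rw [image_congr (hf'S.mono (coe_subset.mpr (hsub e he)))]
    exact hred e he

theorem Arrows.insert_free_edge {n p q M : ℕ} (hsub : ∀ e ∈ E', e ⊆ S') (he₀ : e₀.card = r)
    (hx : e₀ ∩ S' = {x}) (hA : Arrows r S' E' n p)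
    (hB : Arrows r (S' ∪ e₀) (insert e₀ E') (n - 1) q) (hpM : p ≤ M) (hqM : q + S'.card ≤ M) :
    Arrows r (S' ∪ e₀) (insert e₀ E') n M := by
  intro c
  obtain ⟨f, hf, hred⟩ | ⟨K, -, hKcard, hK⟩ :=
    hA.exists_of_le_card c (T := univ) (by simpa using hpM)
  swap
  · exact Or.inr (hK.hasBlueClique hKcard.ge)
  have hFcard : (S'.image f).card = S'.card := card_image_of_injOn hf
  obtain hH | ⟨G, hGT, hGcard, hG⟩ := hB.exists_of_le_card c (T := univ \ S'.image f)
    (by rw [card_sdiff_of_subset (subset_univ _), card_univ, Fintype.card_fin, hFcard]; omega)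
  · exact Or.inl hH
  have hFG : Disjoint (S'.image f) G := disjoint_of_subset_right hGT disjoint_sdiff
  by_cases hext : ∃ Y ⊆ G, Y.card = r - 1 ∧ c (insert (f x) Y) = true
  · obtain ⟨Y, hYG, hYcard, hYred⟩ := hext
    exact Or.inl (hasRedCopy_insert_free_edge hsub he₀ hx hf hred (hFG.mono_right hYG) hYcard hYred)
  · simp only [not_exists, not_and, Bool.not_eq_true] at hext
    have hfx : f x ∉ G :=
      disjoint_left.mp hFG (mem_image_of_mem f (mem_of_inter_eq_singleton hx).2)
    refine Or.inr ((hG.insert (v := f x) hext).hasBlueClique ?_)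
    rw [card_insert_of_notMem hfx]
    omega

end FreeEdge

end HypergraphRamsey

theorem stmt_10_general (r m n : ℕ) {V : Type*} [DecidableEq V]
    -- `H'` is a connected `r`-uniform hypergraph with vertex set `S'` of order `m - r + 1 ≥ r`:
    (S' : Finset V) (E' : Set (Finset V))
    (hsub : ∀ e ∈ E', e ⊆ S')
    (hcard : S'.card = m - r + 1)
    -- `H` is obtained from `H'` by adding a free hyperedge `e₀` at the vertex `x`:
    (e₀ : Finset V) (he₀ : e₀.card = r) (x : V) (hx : e₀ ∩ S' = {x}) :
    hRamseyOn r (S' ∪ e₀) (insert e₀ E') n ≤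
      max (hRamseyOn r S' E' n)
        (hRamseyOn r (S' ∪ e₀) (insert e₀ E') (n - 1) + (m - r + 1)) := by
  simp only [HypergraphRamsey.hRamseyOn_eq_sInf]
  obtain hempty | ⟨p, hp⟩ :=
    {p | HypergraphRamsey.Arrows r (S' ∪ e₀) (insert e₀ E') n p}.eq_empty_or_nonempty
  · -- junk value `sInf ∅ = 0`
    simp [hempty]
  have hA := (hp.of_subgraph Finset.subset_union_left (Set.subset_insert _ _)).sInf_mem
  have hB := (hp.of_le (n.sub_le 1)).sInf_mem
  exact Nat.sInf_le (hA.insert_free_edge hsub he₀ hx hB (le_max_left _ _) (hcard ▸ le_max_right _ _))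

theorem stmt_10 (r m n : ℕ) {V : Type*} [DecidableEq V]
    -- `H'` is a connected `r`-uniform hypergraph with vertex set `S'` of order `m - r + 1 ≥ r`:
    (S' : Finset V) (E' : Set (Finset V))
    (hu : ∀ e ∈ E', e.card = r) (hsub : ∀ e ∈ E', e ⊆ S')
    (hconn : ∀ x ∈ S', ∀ y ∈ S', hReach E' x y)
    (hcard : S'.card = m - r + 1) (hord : r ≤ m - r + 1)
    -- `H` is obtained from `H'` by adding a free hyperedge `e₀` at the vertex `x`:
    (e₀ : Finset V) (he₀ : e₀.card = r) (x : V) (hx : e₀ ∩ S' = {x}) :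
    hRamseyOn r (S' ∪ e₀) (insert e₀ E') n ≤
      max (hRamseyOn r S' E' n)
        (hRamseyOn r (S' ∪ e₀) (insert e₀ E') (n - 1) + (m - r + 1)) :=
  stmt_10_general r m n S' E' hsub hcard e₀ he₀ x hx
end

section
/- Let H' be a connected r-uniform hypergraph of order m − r + 1 ≥ r, and let H be obtained from H' by adding a free hyperedge (so H has order m). Then R(H, K_n^{(r)}; r) ≤ max{ R(H', K_n^{(r)}; r) + n − 1, R(H, K_{n−1}^{(r)}; r) }. -/
/-!
Let `M = max (R(H', K_n) + n - 1) (R(H, K_{n-1}))` and colour the `r`-sets of `M` points.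
Either there is a red `H` or a blue `K_{n-1}` on a set `B`. Off `B` there remain at least
`R(H', K_n)` points, so there is a blue `K_n` or a red copy of `H'`; let `v` be the image of
the vertex `x` at which the free edge hangs. If `{v} ∪ W` is red for some `(r-1)`-subset `W`
of `B`, sending the other vertices of the free edge onto `W` gives a red `H`; otherwise
`B ∪ {v}` is a blue `K_n`.
-/

open Finset

theorem Fin.image_castSucc_preimage_castSucc {n : ℕ} (e : Finset (Fin (n + 1))) :
    (e.preimage Fin.castSucc (Fin.castSucc_injective n).injOn).image Fin.castSucc =
      e.erase (Fin.last n) := by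
  ext a
  simp only [mem_image, mem_preimage, mem_erase]
  constructor
  · rintro ⟨i, hi, rfl⟩
    exact ⟨(Fin.castSucc_lt_last i).ne, hi⟩
  · rintro ⟨ha, hae⟩
    obtain ⟨i, rfl⟩ := Fin.exists_castSucc_eq.mpr ha
    exact ⟨i, hae, rfl⟩

theorem Finset.exists_bijOn_of_card_eq {V α : Type*} {D : Finset V} {W : Finset α}
    [Nonempty α] (h : D.card = W.card) : ∃ φ : V → α, Set.BijOn φ D W :=
  D.finite_toSet.exists_bijOn_of_encard_eq (by simp [h])

section Coloring

variable {V α : Type*} [DecidableEq V] [DecidableEq α] (c : Finset α → Bool) {r : ℕ}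

theorem color_image_snoc_eq_false {n : ℕ} {g : Fin n → α}
    (hblue : ∀ e : Finset (Fin n), e.card = r → c (e.image g) = false) {v : α}
    (hlink : ∀ W : Finset (Fin n), W.card = r - 1 → c (insert v (W.image g)) = false)
    (e : Finset (Fin (n + 1))) (he : e.card = r) :
    c (e.image (Fin.snoc g v : Fin (n + 1) → α)) = false := by
  set W := e.preimage Fin.castSucc (Fin.castSucc_injective n).injOn
  have hWcard : W.card = (e.erase (Fin.last n)).card := by
    rw [← Fin.image_castSucc_preimage_castSucc,
      card_image_of_injective _ (Fin.castSucc_injective n)]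
  have hWimage : W.image g = (e.erase (Fin.last n)).image (Fin.snoc g v) := by
    rw [← Fin.image_castSucc_preimage_castSucc, image_image]
    exact image_congr fun i _ => (Fin.snoc_castSucc (α := fun _ => α) v g i).symm
  by_cases hlast : Fin.last n ∈ e
  · rw [← insert_erase hlast, image_insert, Fin.snoc_last, ← hWimage]
    exact hlink W (by rw [hWcard, card_erase_of_mem hlast, he])
  · rw [← erase_eq_of_notMem hlast, ← hWimage]
    exact hblue W (by rw [hWcard, erase_eq_of_notMem hlast, he])

theorem exists_red_copy_add_free_edge {S : Finset V} {E : Set (Finset V)}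
    (hsub : ∀ e ∈ E, e ⊆ S) {e₀ : Finset V} (he₀ : e₀.card = r) {x : V} (hx : e₀ ∩ S = {x})
    {f : V → α} (hf : Set.InjOn f S) (hred : ∀ e ∈ E, c (e.image f) = true)
    {W : Finset α} (hW : W.card = r - 1) (hWf : ∀ u ∈ S, f u ∉ W)
    (hfree : c (insert (f x) W) = true) :
    ∃ F : V → α, Set.InjOn F ↑(S ∪ e₀) ∧ ∀ e ∈ insert e₀ E, c (e.image F) = true := by
  obtain ⟨hxe₀, hxS⟩ := mem_inter.mp (hx ▸ mem_singleton_self x : x ∈ e₀ ∩ S)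
  set D := e₀.erase x
  have hDS : Disjoint S D := by
    rw [disjoint_left]
    intro u huS huD
    have : u ∈ e₀ ∩ S := mem_inter.mpr ⟨mem_of_mem_erase huD, huS⟩
    rw [hx, mem_singleton] at this
    exact ne_of_mem_erase huD this
  have : Nonempty α := ⟨f x⟩
  obtain ⟨φ, hφ⟩ := exists_bijOn_of_card_eq (D := D) (W := W)
    (by rw [card_erase_of_mem hxe₀, he₀, hW])
  set F := D.piecewise φ f
  have hFS : ∀ u ∈ S, F u = f u := fun u hu =>
    piecewise_eq_of_notMem _ _ _ (disjoint_left.mp hDS hu)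
  have hFD : ∀ u ∈ D, F u = φ u := fun u hu => piecewise_eq_of_mem _ _ _ hu
  have hSe₀ : S ∪ e₀ = S ∪ D := by
    rw [← insert_erase hxe₀, union_insert, insert_eq_of_mem (mem_union_left _ hxS)]
  refine ⟨F, ?_, ?_⟩
  · rw [hSe₀, coe_union, Set.injOn_union (disjoint_coe.mpr hDS)]
    refine ⟨hf.congr fun u hu => (hFS u hu).symm, hφ.injOn.congr fun u hu => (hFD u hu).symm,
      ?_⟩
    intro u hu w hw hFuw
    rw [hFS u hu, hFD w hw] at hFuw
    exact hWf u hu (hFuw ▸ hφ.mapsTo hw)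
  · rintro e (rfl | he)
    · have hD : D.image F = W := by
        rw [image_congr hFD, ← coe_inj, coe_image, hφ.image_eq]
      rw [← insert_erase hxe₀, image_insert, hD, hFS x hxS]
      exact hfree
    · rw [image_congr fun u hu => hFS u (hsub e he hu)]
      exact hred e he

end Coloring

/-- The arrow relation `p → (H, K_n^{(r)})`, the condition minimised in `hRamseyOn`. -/
def RamseyArrows {V : Type*} [DecidableEq V] (r : ℕ) (S : Finset V) (E : Set (Finset V))
    (n p : ℕ) : Prop :=
  ∀ c : Finset (Fin p) → Bool,
    (∃ f : V → Fin p, Set.InjOn f ↑S ∧ ∀ e ∈ E, c (e.image f) = true) ∨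
    (∃ g : Fin n → Fin p, Function.Injective g ∧
      ∀ e : Finset (Fin n), e.card = r → c (e.image g) = false)

section RamseyNumber

variable {V : Type*} [DecidableEq V] {r : ℕ} {S S' : Finset V} {E E' : Set (Finset V)} {n p : ℕ}

theorem hRamseyOn_eq_sInf : hRamseyOn r S E n = sInf {p | RamseyArrows r S E n p} :=
  rfl

-- `sInf ∅ = 0`: a Ramsey number that does not exist is recorded as `0`.
theorem hRamseyOn_eq_zero_of_forall_not (h : ∀ p, ¬ RamseyArrows r S E n p) :
    hRamseyOn r S E n = 0 := by
  rw [hRamseyOn_eq_sInf, Nat.sInf_eq_zero]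
  exact Or.inr (Set.eq_empty_of_forall_notMem h)

namespace RamseyArrows

theorem hRamseyOn_le (h : RamseyArrows r S E n p) : hRamseyOn r S E n ≤ p :=
  Nat.sInf_le h

theorem at_hRamseyOn (h : RamseyArrows r S E n p) :
    RamseyArrows r S E n (hRamseyOn r S E n) := by
  rw [hRamseyOn_eq_sInf]
  exact Nat.sInf_mem (s := {p | RamseyArrows r S E n p}) ⟨p, h⟩

theorem mono (hS : S ⊆ S') (hE : E ⊆ E') (h : RamseyArrows r S' E' n p) :
    RamseyArrows r S E n p := fun c =>
  (h c).imp (fun ⟨f, hf, hred⟩ => ⟨f, hf.mono (coe_subset.mpr hS), fun e he => hred e (hE he)⟩)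
    id

theorem of_succ (h : RamseyArrows r S E (n + 1) p) : RamseyArrows r S E n p := fun c =>
  (h c).imp id fun ⟨g, hg, hblue⟩ => ⟨g ∘ Fin.castSucc, hg.comp (Fin.castSucc_injective n),
    fun e he => by
      rw [← image_image]
      exact hblue _ (by rw [card_image_of_injective _ (Fin.castSucc_injective n), he])⟩

theorem exists_within (h : RamseyArrows r S E n p) {α : Type*} [DecidableEq α]
    (c : Finset α → Bool) (T : Finset α) (hT : p ≤ T.card) :
    (∃ f : V → α, (∀ u, f u ∈ T) ∧ Set.InjOn f ↑S ∧ ∀ e ∈ E, c (e.image f) = true) ∨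
    (∃ g : Fin n → α, Function.Injective g ∧
      ∀ e : Finset (Fin n), e.card = r → c (e.image g) = false) := by
  set j : Fin p → α := fun i => T.equivFin.symm (Fin.castLE hT i)
  have hj : Function.Injective j :=
    Subtype.val_injective.comp (T.equivFin.symm.injective.comp (Fin.castLE_injective hT))
  obtain ⟨f, hf, hred⟩ | ⟨g, hg, hblue⟩ := h fun e => c (e.image j)
  · refine Or.inl ⟨j ∘ f, fun u => (T.equivFin.symm _).2,
      hj.injOn.comp hf (Set.mapsTo_univ _ _), fun e he => ?_⟩
    rw [← image_image]
    exact hred e he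
  · refine Or.inr ⟨j ∘ g, hj.comp hg, fun e he => ?_⟩
    rw [← image_image]
    exact hblue e he

theorem add_free_edge (hsub : ∀ e ∈ E, e ⊆ S) {e₀ : Finset V} (he₀ : e₀.card = r) {x : V}
    (hx : e₀ ∩ S = {x}) {p₁ p₂ : ℕ} (h₁ : RamseyArrows r S E (n + 1) p₁)
    (h₂ : RamseyArrows r (S ∪ e₀) (insert e₀ E) n p₂) :
    RamseyArrows r (S ∪ e₀) (insert e₀ E) (n + 1) (max (p₁ + n) p₂) := by
  intro c
  obtain ⟨f, -, hf, hred⟩ | ⟨g, hg, hblue⟩ := h₂.exists_within c univ (by simp)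
  · exact Or.inl ⟨f, hf, hred⟩
  have hT : p₁ ≤ (univ.image g)ᶜ.card := by
    rw [card_compl, card_image_of_injective _ hg, card_fin, Fintype.card_fin]
    omega
  obtain ⟨f, hfT, hf, hred⟩ | hblue' := h₁.exists_within c _ hT
  · have hfg : ∀ u, f u ∉ Set.range g := fun u ⟨i, hi⟩ =>
      mem_compl.mp (hfT u) (hi ▸ mem_image_of_mem g (mem_univ i))
    by_cases hlink :
        ∀ W : Finset (Fin n), W.card = r - 1 → c (insert (f x) (W.image g)) = false
    · exact Or.inr ⟨Fin.snoc g (f x), Fin.snoc_injective_of_injective hg (hfg x),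
        color_image_snoc_eq_false c hblue hlink⟩
    · push Not at hlink
      obtain ⟨W, hW, hfree⟩ := hlink
      refine Or.inl (exists_red_copy_add_free_edge c hsub he₀ hx hf hred
        (by rw [card_image_of_injective _ hg, hW]) (fun u _ hu => ?_) (by simpa using hfree))
      obtain ⟨i, -, hi⟩ := mem_image.mp hu
      exact hfg u ⟨i, hi⟩
  · exact Or.inr hblue'

end RamseyArrows

end RamseyNumber

theorem stmt_11_general (r n : ℕ) {V : Type*} [DecidableEq V]
    -- `H'` is a connected `r`-uniform hypergraph with vertex set `S'` of order `m - r + 1 ≥ r`: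
    (S' : Finset V) (E' : Set (Finset V))
    (hsub : ∀ e ∈ E', e ⊆ S')
    -- `H` is obtained from `H'` by adding a free hyperedge `e₀` at the vertex `x`:
    (e₀ : Finset V) (he₀ : e₀.card = r) (x : V) (hx : e₀ ∩ S' = {x}) :
    hRamseyOn r (S' ∪ e₀) (insert e₀ E') n ≤
      max (hRamseyOn r S' E' n + n - 1)
        (hRamseyOn r (S' ∪ e₀) (insert e₀ E') (n - 1)) := by
  rcases n with _ | n
  · -- `0 - 1 = 0`, so the left-hand side is the second term of the maximum.
    exact le_max_right _ _
  by_cases hfin : ∃ p, RamseyArrows r (S' ∪ e₀) (insert e₀ E') (n + 1) p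
  · obtain ⟨p, hp⟩ := hfin
    have h₁ := (hp.mono subset_union_left (Set.subset_insert _ _)).at_hRamseyOn
    have h₂ := hp.of_succ.at_hRamseyOn
    simpa using (h₁.add_free_edge hsub he₀ hx h₂).hRamseyOn_le
  · push Not at hfin
    rw [hRamseyOn_eq_zero_of_forall_not hfin]
    exact Nat.zero_le _

theorem stmt_11 (r m n : ℕ) {V : Type*} [DecidableEq V]
    -- `H'` is a connected `r`-uniform hypergraph with vertex set `S'` of order `m - r + 1 ≥ r`:
    (S' : Finset V) (E' : Set (Finset V))
    (hu : ∀ e ∈ E', e.card = r) (hsub : ∀ e ∈ E', e ⊆ S')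
    (hconn : ∀ x ∈ S', ∀ y ∈ S', hReach E' x y)
    (hcard : S'.card = m - r + 1) (hord : r ≤ m - r + 1)
    -- `H` is obtained from `H'` by adding a free hyperedge `e₀` at the vertex `x`:
    (e₀ : Finset V) (he₀ : e₀.card = r) (x : V) (hx : e₀ ∩ S' = {x}) :
    hRamseyOn r (S' ∪ e₀) (insert e₀ E') n ≤
      max (hRamseyOn r S' E' n + n - 1)
        (hRamseyOn r (S' ∪ e₀) (insert e₀ E') (n - 1)) :=
  stmt_11_general r n S' E' hsub e₀ he₀ x hx
end

section
/- If n ≥ r ≥ 2 and T_m^{(r)} is any r-uniform tree on m vertices, then R(T_m^{(r)}, K_n^{(r)}; r) ≤ (m−1)(n−1)/(r−1) + 1. -/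
/-- `hRamsey E r n` is the Ramsey number `R(H, K_n^{(r)}; r)` where `H` is the
hypergraph with vertex type `V` and hyperedge set `E`. -/
noncomputable def hRamsey {V : Type*} [DecidableEq V] (E : Set (Finset V)) (r n : ℕ) : ℕ :=
  sInf {p | ∀ c : Finset (Fin p) → Bool,
    (∃ f : V → Fin p, Function.Injective f ∧ ∀ e ∈ E, c (e.image f) = true) ∨
    (∃ g : Fin n → Fin p, Function.Injective g ∧
      ∀ e : Finset (Fin n), e.card = r → c (e.image g) = false)}

section Embedding

variable {V W : Type*} [DecidableEq V] [DecidableEq W]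

theorem subset_foldr_union_of_mem {l : List (Finset V)} {e : Finset V} (he : e ∈ l) :
    e ⊆ l.foldr (· ∪ ·) ∅ := by
  induction l with
  | nil => simp at he
  | cons a l ih =>
    rcases List.mem_cons.1 he with rfl | h
    · exact Finset.subset_union_left
    · exact (ih h).trans Finset.subset_union_right

theorem IsTreeList.card_foldr_union {r : ℕ} (hr : 0 < r) {l : List (Finset V)}
    (hl : IsTreeList r l) : (l.foldr (· ∪ ·) ∅).card = l.length * (r - 1) + 1 := by
  induction hl with
  | single e he =>
    simp only [List.foldr_cons, List.foldr_nil, Finset.union_empty, List.length_singleton, he]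
    omega
  | cons e l _ he hint ih =>
    have := Finset.card_union_add_card_inter e (l.foldr (· ∪ ·) ∅)
    simp only [List.foldr_cons, List.length_cons, Nat.succ_mul]
    omega

theorem exists_extend_of_inter_eq_singleton {U e : Finset V} {e' : Finset W} {u : V}
    {f₀ : V → W} (hf₀ : Set.InjOn f₀ U) (hu : e ∩ U = {u}) (hfu : f₀ u ∈ e')
    (hcard : e.card = e'.card) (hdisj : Disjoint (e'.erase (f₀ u)) (U.image f₀)) :
    ∃ f : V → W, Set.EqOn f f₀ U ∧ Set.InjOn f ↑(e ∪ U) ∧ e.image f = e' := by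
  have : Nonempty W := ⟨f₀ u⟩
  have huU : u ∈ e ∩ U := hu ▸ Finset.mem_singleton_self u
  have hue : u ∈ e := (Finset.mem_inter.1 huU).1
  have hnew : Disjoint (e.erase u) U := by
    refine Finset.disjoint_left.2 fun y hy hyU => Finset.ne_of_mem_erase hy ?_
    simpa [hu] using Finset.mem_inter.2 ⟨Finset.mem_of_mem_erase hy, hyU⟩
  obtain ⟨g, hg⟩ := (e.erase u).finite_toSet.exists_bijOn_of_encard_eq
    (t := ↑(e'.erase (f₀ u))) (β := W) (by
      simp only [Set.encard_coe_eq_coe_finsetCard, Finset.card_erase_of_mem hue,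
        Finset.card_erase_of_mem hfu, hcard])
  set f := (e.erase u).piecewise g f₀
  have hagree : Set.EqOn f f₀ U := fun y hy =>
    Finset.piecewise_eq_of_notMem _ _ _ (Finset.disjoint_right.1 hnew hy)
  have hbij : Set.BijOn f ↑(e.erase u) ↑(e'.erase (f₀ u)) :=
    hg.congr fun y hy => (Finset.piecewise_eq_of_mem _ _ _ hy).symm
  refine ⟨f, hagree, ?_, ?_⟩
  · have hsplit : (↑(e ∪ U) : Set V) = ↑(e.erase u) ∪ ↑U := by
      rw [← Finset.coe_union, Finset.erase_union_of_mem (Finset.mem_inter.1 huU).2]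
    rw [hsplit, Set.injOn_union (Finset.disjoint_coe.2 hnew)]
    refine ⟨hbij.injOn, hf₀.congr hagree.symm, fun x hx y hy hxy => ?_⟩
    refine Finset.disjoint_left.1 hdisj (hbij.mapsTo hx) ?_
    rw [hxy, hagree hy]
    exact Finset.mem_image_of_mem f₀ hy
  · have himage : (e.erase u).image f = e'.erase (f₀ u) := by exact_mod_cast hbij.image_eq
    rw [← Finset.insert_erase hue, Finset.image_insert, himage,
      hagree (Finset.mem_inter.1 huU).2, Finset.insert_erase hfu]

def IsMonoClique (c : Finset W → Bool) (r : ℕ) (b : Bool) (A : Finset W) : Prop :=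
  ∀ e ⊆ A, e.card = r → c e = b

theorem IsMonoClique.exists_fin_embedding {c : Finset W → Bool} {r n : ℕ} {b : Bool}
    {A : Finset W} (hA : IsMonoClique c r b A) (hn : n ≤ A.card) :
    ∃ g : Fin n → W, Function.Injective g ∧
      ∀ e : Finset (Fin n), e.card = r → c (e.image g) = b := by
  have hg : Function.Injective fun i => (A.equivFin.symm (Fin.castLE hn i) : W) :=
    Subtype.val_injective.comp (A.equivFin.symm.injective.comp (Fin.castLE_injective hn))
  refine ⟨_, hg, fun e he => hA _ ?_ (by rw [Finset.card_image_of_injective _ hg, he])⟩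
  intro x hx
  obtain ⟨i, -, rfl⟩ := Finset.mem_image.1 hx
  exact (A.equivFin.symm _).2

theorem exists_isMonoClique_saturated (c : Finset W → Bool) {r : ℕ} (hr : 0 < r)
    (S : Finset W) :
    ∃ Q ⊆ S, IsMonoClique c r false Q ∧
      ∀ x ∈ S \ Q, ∃ e : Finset W, e.card = r ∧ x ∈ e ∧ e.erase x ⊆ Q ∧ c e = true := by
  classical
  have hempty : ∅ ∈ S.powerset.filter (IsMonoClique c r false) := by
    refine Finset.mem_filter.2 ⟨Finset.empty_mem_powerset S, fun e he hcard => ?_⟩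
    rw [Finset.subset_empty.1 he, Finset.card_empty] at hcard
    omega
  obtain ⟨Q, hQF, hQmax⟩ := Finset.exists_max_image _ Finset.card ⟨∅, hempty⟩
  obtain ⟨hQS, hQ⟩ := Finset.mem_filter.1 hQF
  refine ⟨Q, Finset.mem_powerset.1 hQS, hQ, fun x hx => ?_⟩
  obtain ⟨hxS, hxQ⟩ := Finset.mem_sdiff.1 hx
  by_contra! hnone
  have hinsert : IsMonoClique c r false (insert x Q) := by
    intro e he hcard
    by_cases hxe : x ∈ e
    · simpa using hnone e hcard hxe fun y hy =>
        (Finset.mem_insert.1 (he (Finset.mem_of_mem_erase hy))).resolve_left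
          (Finset.ne_of_mem_erase hy)
    · exact hQ e (fun y hy => (Finset.mem_insert.1 (he hy)).resolve_left
        fun hyx => hxe (hyx ▸ hy)) hcard
  have := hQmax _ (Finset.mem_filter.2 ⟨Finset.mem_powerset.2
    (Finset.insert_subset hxS (Finset.mem_powerset.1 hQS)), hinsert⟩)
  rw [Finset.card_insert_of_notMem hxQ] at this
  omega

theorem exists_extend_true_edge {c : Finset W → Bool} {r : ℕ} {S Q : Finset W}
    (hsat : ∀ x ∈ S \ Q, ∃ e : Finset W, e.card = r ∧ x ∈ e ∧ e.erase x ⊆ Q ∧ c e = true)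
    (hQS : Q ⊆ S) {U e : Finset V} {u : V} (he : e.card = r) (hu : e ∩ U = {u}) {f₀ : V → W}
    (hinj : Set.InjOn f₀ U) (hmaps : Set.MapsTo f₀ U ↑(S \ Q)) :
    ∃ f : V → W, Set.EqOn f f₀ U ∧ Set.InjOn f ↑(e ∪ U) ∧ Set.MapsTo f ↑(e ∪ U) ↑S ∧
      c (e.image f) = true := by
  have huU : u ∈ U := (Finset.mem_inter.1 (hu ▸ Finset.mem_singleton_self u)).2
  obtain ⟨e', he', hxe', hQe', hc⟩ := hsat (f₀ u) (hmaps huU)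
  have hdisj : Disjoint (e'.erase (f₀ u)) (U.image f₀) := by
    refine Finset.disjoint_left.2 fun z hz hzU => ?_
    obtain ⟨y, hy, rfl⟩ := Finset.mem_image.1 hzU
    exact (Finset.mem_sdiff.1 (hmaps hy)).2 (hQe' hz)
  obtain ⟨f, hagree, hf, himage⟩ :=
    exists_extend_of_inter_eq_singleton hinj hu hxe' (he.trans he'.symm) hdisj
  refine ⟨f, hagree, hf, fun y hy => ?_, himage ▸ hc⟩
  rcases Finset.mem_union.1 hy with hye | hyU
  · have : f y ∈ e' := himage ▸ Finset.mem_image_of_mem f hye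
    rw [← Finset.insert_erase hxe'] at this
    rcases Finset.mem_insert.1 this with h | h
    · exact h ▸ (Finset.mem_sdiff.1 (hmaps huU)).1
    · exact hQS (hQe' h)
  · exact hagree hyU ▸ (Finset.mem_sdiff.1 (hmaps hyU)).1

theorem IsTreeList.exists_embedding {c : Finset W → Bool} {r n : ℕ} (hr : 0 < r)
    (hc : ∀ A, IsMonoClique c r false A → A.card < n) {l : List (Finset V)}
    (hl : IsTreeList r l) (S : Finset W) (hS : l.length * (n - 1) + 1 ≤ S.card) :
    ∃ f : V → W, Set.InjOn f ↑(l.foldr (· ∪ ·) ∅) ∧ Set.MapsTo f ↑(l.foldr (· ∪ ·) ∅) ↑S ∧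
      ∀ e ∈ l, c (e.image f) = true := by
  induction hl generalizing S with
  | single e he =>
    obtain ⟨Q, hQS, hQ, hsat⟩ := exists_isMonoClique_saturated c hr S
    have hQcard := hc Q hQ
    obtain ⟨x, hx⟩ : (S \ Q).Nonempty := by
      rw [← Finset.card_pos, Finset.card_sdiff_of_subset hQS]
      simp only [List.length_singleton] at hS
      omega
    obtain ⟨u, hu⟩ := Finset.card_pos.1 (he ▸ hr)
    obtain ⟨f, -, hinj, hmaps, hf⟩ := exists_extend_true_edge hsat hQS he
      (Finset.inter_singleton_of_mem hu) (by simp) (fun _ _ => hx)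
    simp only [List.foldr_cons, List.foldr_nil, Finset.union_empty, List.mem_singleton,
      forall_eq]
    rw [Finset.union_eq_left.2 (Finset.singleton_subset_iff.2 hu)] at hinj hmaps
    exact ⟨f, hinj, hmaps, hf⟩
  | cons e l _ he hint ih =>
    obtain ⟨Q, hQS, hQ, hsat⟩ := exists_isMonoClique_saturated c hr S
    have hQcard := hc Q hQ
    obtain ⟨f₀, hinj₀, hmaps₀, hf₀⟩ := ih (S \ Q) (by
      rw [Finset.card_sdiff_of_subset hQS]
      simp only [List.length_cons, Nat.succ_mul] at hS
      omega)
    obtain ⟨u, hu⟩ := Finset.card_eq_one.1 hint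
    obtain ⟨f, hagree, hinj, hmaps, hf⟩ :=
      exists_extend_true_edge hsat hQS he hu hinj₀ hmaps₀
    refine ⟨f, hinj, hmaps, fun e₀ he₀ => ?_⟩
    rcases List.mem_cons.1 he₀ with rfl | he₀
    · exact hf
    · rw [Finset.image_congr (hagree.mono (subset_foldr_union_of_mem he₀))]
      exact hf₀ e₀ he₀

end Embedding

theorem stmt_13_general (r n m : ℕ) (hr : 2 ≤ r)
    {V : Type*} [Fintype V] [DecidableEq V]
    -- `T_m^{(r)}`: an `r`-uniform tree on the `m` vertices of `V`:
    (l : List (Finset V)) (hl : IsTreeList r l) (hcover : l.foldr (· ∪ ·) ∅ = Finset.univ)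
    (hm : Fintype.card V = m) :
    hRamsey {e | e ∈ l} r n ≤ (m - 1) * (n - 1) / (r - 1) + 1 := by
  have ht : m - 1 = l.length * (r - 1) := by
    rw [← hm, ← Finset.card_univ, ← hcover, hl.card_foldr_union (by omega)]
    omega
  rw [ht, mul_right_comm, Nat.mul_div_cancel _ (by omega)]
  refine Nat.sInf_le fun c => ?_
  by_cases hclique : ∃ A, IsMonoClique c r false A ∧ n ≤ A.card
  · obtain ⟨A, hA, hnA⟩ := hclique
    exact Or.inr (hA.exists_fin_embedding hnA)
  · push Not at hclique
    obtain ⟨f, hinj, -, hf⟩ := hl.exists_embedding (by omega) hclique Finset.univ (by simp)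
    rw [hcover, Finset.coe_univ, Set.injOn_univ] at hinj
    exact Or.inl ⟨f, hinj, hf⟩

theorem stmt_13 (r n m : ℕ) (hr : 2 ≤ r) (hn : r ≤ n)
    {V : Type*} [Fintype V] [DecidableEq V]
    -- `T_m^{(r)}`: an `r`-uniform tree on the `m` vertices of `V`:
    (l : List (Finset V)) (hl : IsTreeList r l) (hcover : l.foldr (· ∪ ·) ∅ = Finset.univ)
    (hm : Fintype.card V = m) :
    hRamsey {e | e ∈ l} r n ≤ (m - 1) * (n - 1) / (r - 1) + 1 :=
  stmt_13_general r n m hr l hl hcover hm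
end

section
/- Let r ≥ 3 be odd and n ≥ r + 1. Then R(T_{2r−1}^{(r)}, K_n^{(r)}; r) ≤ (r+1)n/2 − (r−1) if n is even, and ≤ (r+1)n/2 − (r−1)/2 if n is odd. -/
open Finset

/-! Fix a maximal family `𝓜` of pairwise disjoint red `r`-sets. If there is no red
`T_{2r-1}^{(r)}`, no red `r`-set meets a member of `𝓜` in exactly one vertex.
If `n ≤ 2|𝓜|`, pick two vertices from each member of `𝓜`: as `r` is odd, every `r`-set of
these vertices meets one of the pairs in exactly one vertex, so it is blue. Otherwise keep one
vertex of each member of `𝓜` together with all vertices outside `⋃ 𝓜`: these are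
`p - (r - 1)|𝓜| ≥ n` vertices, and a red `r`-set among them would meet some member of `𝓜`
(by maximality) in exactly its kept vertex. -/

section Embedding

variable {V β : Type*} [DecidableEq V]

lemma exists_mapsTo_injOn_apply_eq {s : Finset V} {t : Finset β} (hst : #s ≤ #t)
    {a : V} {x : β} (ha : a ∈ s) (hx : x ∈ t) :
    ∃ g : V → β, Set.MapsTo g s t ∧ Set.InjOn g s ∧ g a = x := by
  classical
  have : Nonempty β := ⟨x⟩
  obtain ⟨f, hf, hfinj⟩ := (s.erase a).finite_toSet.exists_injOn_of_encard_le
    (t := (t.erase x : Set β)) (by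
      simp only [Set.encard_coe_eq_coe_finsetCard, Nat.cast_le,
        card_erase_of_mem ha, card_erase_of_mem hx]
      omega)
  have hf' : ∀ v ∈ s, v ≠ a → f v ≠ x ∧ f v ∈ t := fun v hv hva =>
    mem_erase.1 (hf (mem_erase.2 ⟨hva, hv⟩))
  refine ⟨Function.update f a x, fun v hv => ?_, fun v hv w hw hvw => ?_, by simp⟩
  · by_cases hva : v = a
    · simpa [hva] using hx
    · simpa [hva] using (hf' v hv hva).2
  · by_cases hva : v = a <;> by_cases hwa : w = a
    · rw [hva, hwa]
    · rw [hva, Function.update_self, Function.update_of_ne hwa] at hvw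
      exact absurd hvw.symm (hf' w hw hwa).1
    · rw [hwa, Function.update_self, Function.update_of_ne hva] at hvw
      exact absurd hvw (hf' v hv hva).1
    · simp only [Function.update_of_ne hva, Function.update_of_ne hwa] at hvw
      exact hfinj (mem_erase.2 ⟨hva, hv⟩) (mem_erase.2 ⟨hwa, hw⟩) hvw

lemma exists_injective_image_eq_of_card_inter_eq_one [Fintype V] [DecidableEq β]
    {e₁ e₂ : Finset V} {A B : Finset β} (hcover : e₁ ∪ e₂ = univ) (he : #(e₁ ∩ e₂) = 1)
    (hAB : #(A ∩ B) = 1) (h₁ : #e₁ = #A) (h₂ : #e₂ = #B) :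
    ∃ f : V → β, Function.Injective f ∧ e₁.image f = A ∧ e₂.image f = B := by
  obtain ⟨a, ha⟩ := card_eq_one.1 he
  obtain ⟨x, hx⟩ := card_eq_one.1 hAB
  have hae : a ∈ e₁ ∩ e₂ := ha ▸ mem_singleton_self a
  have hxAB : x ∈ A ∩ B := hx ▸ mem_singleton_self x
  rw [mem_inter] at hae hxAB
  have he₂ : ∀ v ∉ e₁, v ∈ e₂ := fun v hv =>
    ((mem_union.1 (hcover ▸ mem_univ v)).resolve_left hv)
  obtain ⟨g₁, hg₁, hg₁inj, hg₁a⟩ := exists_mapsTo_injOn_apply_eq h₁.le hae.1 hxAB.1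
  obtain ⟨g₂, hg₂, hg₂inj, hg₂a⟩ := exists_mapsTo_injOn_apply_eq h₂.le hae.2 hxAB.2
  set f := e₁.piecewise g₁ g₂
  have hfA : Set.MapsTo f e₁ A := fun v hv => by
    rw [mem_coe] at hv
    simpa [f, hv] using hg₁ hv
  have hfB : Set.MapsTo f e₂ B := fun v hv => by
    rw [mem_coe] at hv
    by_cases hv₁ : v ∈ e₁
    · obtain rfl : v = a := mem_singleton.1 (ha ▸ mem_inter.2 ⟨hv₁, hv⟩)
      simpa [f, hae.1, hg₁a] using hxAB.2
    · simpa [f, hv₁] using hg₂ hv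
  have hcross : ∀ u ∈ e₁, ∀ v ∉ e₁, f u ≠ f v := by
    intro u hu v hv huv
    have hfv : f v ∈ A ∩ B := mem_inter.2 ⟨huv ▸ hfA hu, hfB (he₂ v hv)⟩
    rw [hx, mem_singleton, ← hg₂a] at hfv
    simp only [f, piecewise_eq_of_notMem _ _ _ hv] at hfv
    exact hv (hg₂inj (he₂ v hv) hae.2 hfv ▸ hae.1)
  have hinj : Function.Injective f := by
    intro u v huv
    by_cases hu : u ∈ e₁ <;> by_cases hv : v ∈ e₁
    · exact hg₁inj hu hv (by simpa [f, hu, hv] using huv)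
    · exact absurd huv (hcross u hu v hv)
    · exact absurd huv.symm (hcross v hv u hu)
    · exact hg₂inj (he₂ u hu) (he₂ v hv) (by simpa [f, hu, hv] using huv)
  have himage : ∀ {e : Finset V} {C : Finset β}, Set.MapsTo f e C → #e = #C → e.image f = C :=
    fun hmaps hcard => eq_of_subset_of_card_le (image_subset_iff.2 hmaps)
      (by rw [card_image_of_injective _ hinj, hcard])
  exact ⟨f, hinj, himage hfA h₁, himage hfB h₂⟩

end Embedding

section Matching

variable {α : Type*} [DecidableEq α]

lemma card_eq_sum_card_inter_of_subset_biUnion {𝓜 : Finset (Finset α)}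
    (h𝓜 : (𝓜 : Set (Finset α)).PairwiseDisjoint id) {e : Finset α} (he : e ⊆ 𝓜.biUnion id) :
    #e = ∑ M ∈ 𝓜, #(e ∩ M) := by
  conv_lhs => rw [← inter_eq_left.2 he, inter_biUnion]
  exact card_biUnion (h𝓜.mono fun M => inter_subset_right)

lemma exists_subset_biUnion_card_inter_eq {𝓜 : Finset (Finset α)}
    (h𝓜 : (𝓜 : Set (Finset α)).PairwiseDisjoint id) {k : ℕ} (hk : ∀ M ∈ 𝓜, k ≤ #M) :
    ∃ S ⊆ 𝓜.biUnion id, #S = k * #𝓜 ∧ ∀ M ∈ 𝓜, #(S ∩ M) = k := by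
  choose T hTM hT using fun M : Finset α => exists_subset_card_eq (min_le_right k #M)
  have hS : ∀ M ∈ 𝓜, 𝓜.biUnion T ∩ M = T M := by
    intro M hM
    refine (subset_inter (subset_biUnion_of_mem T hM) (hTM M)).antisymm' fun v hv => ?_
    obtain ⟨⟨N, hN, hvN⟩, hvM⟩ : (∃ N ∈ 𝓜, v ∈ T N) ∧ v ∈ M := by simpa using hv
    rwa [h𝓜.elim_finset hM hN v hvM (hTM N hvN)]
  have hSM : ∀ M ∈ 𝓜, #(𝓜.biUnion T ∩ M) = k := fun M hM => by
    rw [hS M hM, hT, min_eq_left (hk M hM)]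
  have hSU : 𝓜.biUnion T ⊆ 𝓜.biUnion id := biUnion_mono fun M _ => hTM M
  refine ⟨𝓜.biUnion T, hSU, ?_, hSM⟩
  rw [card_eq_sum_card_inter_of_subset_biUnion h𝓜 hSU, sum_const_nat hSM, mul_comm]

/-- The coloring `c` has no red `T_{2r-1}^{(r)}`. -/
def NoRedTree (c : Finset α → Bool) (r : ℕ) : Prop :=
  ∀ A B : Finset α, #A = r → #B = r → c A = true → c B = true → #(A ∩ B) ≠ 1

structure IsRedMatching (c : Finset α → Bool) (r : ℕ) (𝓜 : Finset (Finset α)) : Prop where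
  card_eq : ∀ M ∈ 𝓜, #M = r
  red : ∀ M ∈ 𝓜, c M = true
  pairwiseDisjoint : (𝓜 : Set (Finset α)).PairwiseDisjoint id

variable {c : Finset α → Bool} {r : ℕ}

lemma exists_isRedMatching_forall_not_disjoint [Fintype α] (hr : 0 < r) :
    ∃ 𝓜, IsRedMatching c r 𝓜 ∧ ∀ e, #e = r → c e = true → ∃ M ∈ 𝓜, ¬Disjoint e M := by
  classical
  obtain ⟨𝓜, h𝓜, hmax⟩ := exists_max_image (univ.filter (IsRedMatching c r)) card
    ⟨∅, mem_filter.2 ⟨mem_univ _, ⟨by simp, by simp, by simp⟩⟩⟩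
  rw [mem_filter] at h𝓜
  refine ⟨𝓜, h𝓜.2, fun e he hce => ?_⟩
  by_contra! hdisj
  have he𝓜 : e ∉ 𝓜 := fun h =>
    (card_pos.1 (he ▸ hr)).ne_empty (disjoint_self.1 (hdisj e h))
  have hbigger : IsRedMatching c r (insert e 𝓜) := by
    refine ⟨?_, ?_, ?_⟩
    · simpa [he] using h𝓜.2.card_eq
    · simpa [hce] using h𝓜.2.red
    · rw [coe_insert]
      exact h𝓜.2.pairwiseDisjoint.insert fun N hN _ => hdisj N hN
  have := hmax _ (mem_filter.2 ⟨mem_univ _, hbigger⟩)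
  rw [card_insert_of_notMem he𝓜] at this
  omega

namespace IsRedMatching

variable {𝓜 : Finset (Finset α)}

lemma exists_blue_card_eq_two_mul (h𝓜 : IsRedMatching c r 𝓜) (hc : NoRedTree c r)
    (hodd : Odd r) (hr : 2 ≤ r) : ∃ S : Finset α, #S = 2 * #𝓜 ∧ ∀ e ⊆ S, #e = r → c e = false := by
  obtain ⟨S, hSU, hScard, hSM⟩ := exists_subset_biUnion_card_inter_eq h𝓜.pairwiseDisjoint
    fun M hM => (h𝓜.card_eq M hM).symm ▸ hr
  refine ⟨S, hScard, fun e heS he => ?_⟩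
  by_contra hce
  rw [Bool.not_eq_false] at hce
  -- `r` is odd, so `e` meets some pair `S ∩ M` in an odd number of vertices, that is in one
  obtain ⟨M, hM, hoddM⟩ : ∃ M ∈ 𝓜, Odd #(e ∩ M) := by
    by_contra! h
    rw [card_eq_sum_card_inter_of_subset_biUnion h𝓜.pairwiseDisjoint (heS.trans hSU)] at he
    exact Nat.not_even_iff_odd.2 hodd
      (he ▸ even_sum _ fun M hM => Nat.not_odd_iff_even.1 (h M hM))
  have hle : #(e ∩ M) ≤ 2 := hSM M hM ▸ card_le_card (inter_subset_inter_right heS)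
  obtain ⟨k, hk⟩ := hoddM
  exact hc e M he (h𝓜.card_eq M hM) hce (h𝓜.red M hM) (by omega)

lemma exists_blue_card_add_mul_eq [Fintype α] (h𝓜 : IsRedMatching c r 𝓜)
    (hc : NoRedTree c r) (hr : 0 < r)
    (hmeet : ∀ e, #e = r → c e = true → ∃ M ∈ 𝓜, ¬Disjoint e M) :
    ∃ W : Finset α, #W + r * #𝓜 = Fintype.card α + #𝓜 ∧ ∀ e ⊆ W, #e = r → c e = false := by
  obtain ⟨S, hSU, hScard, hSM⟩ := exists_subset_biUnion_card_inter_eq h𝓜.pairwiseDisjoint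
    (k := 1) fun M hM => (h𝓜.card_eq M hM).symm ▸ hr
  have hUcard : #(𝓜.biUnion id) = r * #𝓜 := by
    rw [card_biUnion h𝓜.pairwiseDisjoint, sum_const_nat (f := fun M => #(id M)) h𝓜.card_eq,
      mul_comm]
  refine ⟨univ \ (𝓜.biUnion id \ S), ?_, fun e heW he => ?_⟩
  · rw [card_univ_sdiff, card_sdiff_of_subset hSU, hUcard, hScard, one_mul]
    have := card_le_univ (𝓜.biUnion id)
    have := Nat.le_mul_of_pos_left #𝓜 hr
    omega
  · by_contra hce
    rw [Bool.not_eq_false] at hce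
    obtain ⟨M, hM, heM⟩ := hmeet e he hce
    have heMS : e ∩ M ⊆ S ∩ M := fun v hv => by
      rw [mem_inter] at hv ⊢
      have hvW := heW hv.1
      simp only [mem_sdiff, mem_univ, mem_biUnion, id, true_and, not_and, not_not] at hvW
      exact ⟨hvW ⟨M, hM, hv.2⟩, hv.2⟩
    have hle : #(e ∩ M) ≤ 1 := hSM M hM ▸ card_le_card heMS
    have hpos : 0 < #(e ∩ M) := card_pos.2 (not_disjoint_iff_nonempty_inter.1 heM)
    exact hc e M he (h𝓜.card_eq M hM) hce (h𝓜.red M hM) (by omega)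

end IsRedMatching

lemma exists_blue_of_noRedTree [Fintype α] (hodd : Odd r) (hr : 2 ≤ r) (hc : NoRedTree c r)
    (n : ℕ) (hn : n + (r - 1) * ((n - 1) / 2) ≤ Fintype.card α) :
    ∃ S : Finset α, n ≤ #S ∧ ∀ e ⊆ S, #e = r → c e = false := by
  obtain ⟨𝓜, h𝓜, hmeet⟩ := exists_isRedMatching_forall_not_disjoint (c := c) (by omega : 0 < r)
  by_cases hlarge : n ≤ 2 * #𝓜
  · obtain ⟨S, hS, hblue⟩ := h𝓜.exists_blue_card_eq_two_mul hc hodd hr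
    exact ⟨S, hS ▸ hlarge, hblue⟩
  · obtain ⟨W, hW, hblue⟩ := h𝓜.exists_blue_card_add_mul_eq hc (by omega) hmeet
    refine ⟨W, ?_, hblue⟩
    have hsmall := Nat.mul_le_mul_left (r - 1) (by omega : #𝓜 ≤ (n - 1) / 2)
    have hsplit : r * #𝓜 = (r - 1) * #𝓜 + #𝓜 := by
      rw [← add_one_mul, Nat.sub_add_cancel (by omega : 1 ≤ r)]
    omega

end Matching

lemma ite_even_bound_eq_add_mul_div_two {r : ℕ} (hodd : Odd r) (n : ℕ) :
    (if Even n then (r + 1) * n / 2 - (r - 1) else (r + 1) * n / 2 - (r - 1) / 2) =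
      n + (r - 1) * ((n - 1) / 2) := by
  obtain ⟨k, rfl⟩ := hodd
  have hhalf : (2 * k + 1 + 1) * n / 2 = (k + 1) * n := by
    rw [show (2 * k + 1 + 1) * n = 2 * ((k + 1) * n) by ring, Nat.mul_div_cancel_left _ two_pos]
  rw [hhalf, Nat.add_sub_cancel, Nat.mul_div_cancel_left k two_pos]
  rcases Nat.even_or_odd' n with ⟨l, rfl | rfl⟩
  · rcases l with _ | m
    · simp
    · rw [if_pos (even_two_mul _), show (2 * (m + 1) - 1) / 2 = m by omega,
        show (k + 1) * (2 * (m + 1)) = 2 * (m + 1) + 2 * k * m + 2 * k by ring]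
      omega
  · rw [if_neg (Nat.not_even_iff_odd.2 (odd_two_mul_add_one l)),
      show (2 * l + 1 - 1) / 2 = l by omega,
      show (k + 1) * (2 * l + 1) = 2 * l + 1 + 2 * k * l + k by ring]
    omega

theorem stmt_15_general (r n : ℕ) (hr : 3 ≤ r) (hodd : Odd r)
    {V : Type*} [Fintype V] [DecidableEq V]
    -- `T_{2r-1}^{(r)}`: two `r`-element hyperedges meeting in exactly one vertex:
    (e₁ e₂ : Finset V) (h1 : e₁.card = r) (h2 : e₂.card = r)
    (hint : (e₁ ∩ e₂).card = 1) (hcover : e₁ ∪ e₂ = Finset.univ) :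
    hRamsey ({e₁, e₂} : Set (Finset V)) r n ≤
      if Even n then (r + 1) * n / 2 - (r - 1) else (r + 1) * n / 2 - (r - 1) / 2 := by
  rw [ite_even_bound_eq_add_mul_div_two hodd]
  refine Nat.sInf_le fun c => ?_
  by_cases hc : NoRedTree c r
  · obtain ⟨S, hS, hblue⟩ := exists_blue_of_noRedTree hodd (by omega) hc n (Fintype.card_fin _).ge
    obtain ⟨T, hTS, hT⟩ := exists_subset_card_eq hS
    refine .inr ⟨T.orderEmbOfFin hT, (T.orderEmbOfFin hT).injective, fun e he => hblue _ ?_ ?_⟩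
    · simpa [image_subset_iff] using fun i _ => hTS (T.orderEmbOfFin_mem hT i)
    · rwa [card_image_of_injective _ (T.orderEmbOfFin hT).injective]
  · simp only [NoRedTree, not_forall, not_not] at hc
    obtain ⟨A, B, hA, hB, hcA, hcB, hAB⟩ := hc
    obtain ⟨f, hf, hfA, hfB⟩ :=
      exists_injective_image_eq_of_card_inter_eq_one hcover hint hAB (h1.trans hA.symm)
        (h2.trans hB.symm)
    exact .inl ⟨f, hf, by simp [hfA, hfB, hcA, hcB]⟩

theorem stmt_15 (r n : ℕ) (hr : 3 ≤ r) (hodd : Odd r) (hn : r + 1 ≤ n)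
    {V : Type*} [Fintype V] [DecidableEq V]
    -- `T_{2r-1}^{(r)}`: two `r`-element hyperedges meeting in exactly one vertex:
    (e₁ e₂ : Finset V) (h1 : e₁.card = r) (h2 : e₂.card = r)
    (hint : (e₁ ∩ e₂).card = 1) (hcover : e₁ ∪ e₂ = Finset.univ) :
    hRamsey ({e₁, e₂} : Set (Finset V)) r n ≤
      if Even n then (r + 1) * n / 2 - (r - 1) else (r + 1) * n / 2 - (r - 1) / 2 :=
  stmt_15_general r n hr hodd e₁ e₂ h1 h2 hint hcover
end

section
/- For all n ≥ 3, the 3-uniform loose path P_5^{(3)} on 5 vertices satisfies R(P_5^{(3)}, K_n^{(3)}; 3) = 2n − 2 if n is even and 2n − 1 if n is odd. -/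
/-- The 3-uniform loose path `P_5^{(3)}` on vertices `0, 1, 2, 3, 4` with hyperedges
`{0,1,2}` and `{2,3,4}`. -/
def P5 : Set (Finset ℕ) := {({0, 1, 2} : Finset ℕ), ({2, 3, 4} : Finset ℕ)}

open Finset

section Coloring

variable {α : Type*} {c : Finset α → Bool}

/-- Colour `true` is red, colour `false` is blue. -/
def IsBlueClique (c : Finset α → Bool) (B : Finset α) : Prop :=
  ∀ t ⊆ B, #t = 3 → c t = false

/-- No red copy of `P_5^{(3)}`: two red triples never share exactly one vertex. -/
def RedLoosePathFree [DecidableEq α] (c : Finset α → Bool) : Prop :=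
  ∀ e₁ e₂ : Finset α, #e₁ = 3 → #e₂ = 3 → c e₁ = true → c e₂ = true → #(e₁ ∩ e₂) ≠ 1

lemma isBlueClique_of_card_le_two {B : Finset α} (hB : #B ≤ 2) : IsBlueClique c B :=
  fun t ht ht3 => absurd (card_le_card ht) (by omega)

variable [DecidableEq α] {B t e e₁ e₂ : Finset α} {u v : α}

lemma inter_eq_singleton_of_subset_insert_insert (ht : t ⊆ insert u (insert v B)) (hut : u ∈ t)
    (hue : u ∈ e) (hve : v ∉ e) (hBe : Disjoint B e) : t ∩ e = {u} := by
  refine eq_singleton_iff_unique_mem.2 ⟨mem_inter.2 ⟨hut, hue⟩, fun x hx => ?_⟩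
  obtain ⟨hxt, hxe⟩ := mem_inter.1 hx
  rcases mem_insert.1 (ht hxt) with rfl | hx
  · rfl
  rcases mem_insert.1 hx with rfl | hxB
  · exact absurd hxe hve
  · exact absurd hxe (disjoint_left.1 hBe hxB)

lemma IsBlueClique.of_subset_insert_insert (hB : IsBlueClique c B)
    (ht : t ⊆ insert u (insert v B)) (hut : u ∉ t) (hvt : v ∉ t) (ht3 : #t = 3) : c t = false :=
  hB t ((subset_insert_iff_of_notMem hvt).1 ((subset_insert_iff_of_notMem hut).1 ht)) ht3

/-- A red triple through `u` (resp. `v`) would meet `e₁` (resp. `e₂`) in that vertex alone. -/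
lemma IsBlueClique.insert_insert_of_red_pair (hc : RedLoosePathFree c) (he₁ : #e₁ = 3)
    (he₂ : #e₂ = 3) (hr₁ : c e₁ = true) (hr₂ : c e₂ = true) (hu₁ : u ∈ e₁) (hu₂ : u ∉ e₂)
    (hv₂ : v ∈ e₂) (hv₁ : v ∉ e₁) (hB : IsBlueClique c B) (hB₁ : Disjoint B e₁)
    (hB₂ : Disjoint B e₂) : IsBlueClique c (insert u (insert v B)) := by
  intro t ht ht3
  by_contra hrt
  rw [Bool.not_eq_false] at hrt
  by_cases hut : u ∈ t
  · refine hc t e₁ ht3 he₁ hrt hr₁ ?_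
    rw [inter_eq_singleton_of_subset_insert_insert ht hut hu₁ hv₁ hB₁, card_singleton]
  by_cases hvt : v ∈ t
  · refine hc t e₂ ht3 he₂ hrt hr₂ ?_
    rw [insert_comm] at ht
    rw [inter_eq_singleton_of_subset_insert_insert ht hvt hv₂ hu₂ hB₂, card_singleton]
  · exact absurd (hB.of_subset_insert_insert ht hut hvt ht3) (by simp [hrt])

lemma card_inter_eq_two_of_subset_insert_insert (hc : RedLoosePathFree c) (he : #e = 3)
    (hr : c e = true) (hu : u ∈ e) (hv : v ∈ e) (hB : IsBlueClique c B) (hBe : Disjoint B e)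
    (ht : t ⊆ insert u (insert v B)) (ht3 : #t = 3) (hrt : c t = true) : #(t ∩ e) = 2 := by
  have hsub : t ∩ e ⊆ {u, v} := fun x hx => by
    obtain ⟨hxt, hxe⟩ := mem_inter.1 hx
    rcases mem_insert.1 (ht hxt) with rfl | hx
    · exact mem_insert_self _ _
    rcases mem_insert.1 hx with rfl | hxB
    · exact mem_insert_of_mem (mem_singleton_self _)
    · exact absurd hxe (disjoint_left.1 hBe hxB)
  have hne : (t ∩ e).Nonempty := by
    by_contra hempty
    rw [not_nonempty_iff_eq_empty, ← disjoint_iff_inter_eq_empty] at hempty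
    refine absurd (hB.of_subset_insert_insert ht ?_ ?_ ht3) (by simp [hrt])
    · exact fun hut => disjoint_left.1 hempty hut hu
    · exact fun hvt => disjoint_left.1 hempty hvt hv
  have hle := (card_le_card hsub).trans card_le_two
  have hpos := hne.card_pos
  have hne_one := hc t e ht3 he hrt hr
  omega

lemma exists_extendable_pair (hc : RedLoosePathFree c) {V : Finset α} (heV : e ⊆ V)
    (he : #e = 3) (hr : c e = true) :
    ∃ Q ⊆ V, #Q ≤ 4 ∧ ∃ u ∈ Q, ∃ v ∈ Q, u ≠ v ∧
      ∀ B ⊆ V, IsBlueClique c B → Disjoint B Q → IsBlueClique c (insert u (insert v B)) := by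
  by_cases hpair : ∃ e₂ ⊆ V, #e₂ = 3 ∧ c e₂ = true ∧ #(e₂ ∩ e) = 2
  · obtain ⟨e₂, he₂V, he₂, hr₂, hint⟩ := hpair
    have hsd₁ : #(e \ e₂) = 1 := by
      have := card_sdiff_add_card_inter e e₂
      rw [inter_comm] at this
      omega
    have hsd₂ : #(e₂ \ e) = 1 := by
      have := card_sdiff_add_card_inter e₂ e
      omega
    obtain ⟨u, hu⟩ := card_eq_one.1 hsd₁
    obtain ⟨v, hv⟩ := card_eq_one.1 hsd₂
    have hu' := mem_sdiff.1 (hu ▸ mem_singleton_self u)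
    have hv' := mem_sdiff.1 (hv ▸ mem_singleton_self v)
    refine ⟨e ∪ e₂, union_subset heV he₂V, ?_, u, mem_union_left _ hu'.1,
      v, mem_union_right _ hv'.1, fun huv => hv'.2 (huv ▸ hu'.1), fun B _ hB hBQ => ?_⟩
    · have := card_union_add_card_inter e e₂
      rw [inter_comm] at this
      omega
    rw [disjoint_union_right] at hBQ
    exact hB.insert_insert_of_red_pair hc he he₂ hr hr₂ hu'.1 hu'.2 hv'.1 hv'.2 hBQ.1 hBQ.2
  · obtain ⟨u, hu, v, hv, huv⟩ := one_lt_card.1 (by omega : 1 < #e)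
    refine ⟨e, heV, by omega, u, hu, v, hv, huv, fun B hBV hB hBe t ht ht3 => ?_⟩
    by_contra hrt
    rw [Bool.not_eq_false] at hrt
    have htV : t ⊆ V := ht.trans (insert_subset (heV hu) (insert_subset (heV hv) hBV))
    exact hpair ⟨t, htV, ht3, hrt,
      card_inter_eq_two_of_subset_insert_insert hc he hr hu hv hB hBe ht ht3 hrt⟩

theorem RedLoosePathFree.exists_isBlueClique (hc : RedLoosePathFree c) (n : ℕ) (V : Finset α)
    (hV : 2 * n - 2 + n % 2 ≤ #V) : ∃ B ⊆ V, #B = n ∧ IsBlueClique c B := by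
  induction n using Nat.strong_induction_on generalizing V with
  | _ n ih =>
  by_cases hn : n ≤ 2
  · obtain ⟨B, hBV, hB⟩ := exists_subset_card_eq (by omega : n ≤ #V)
    exact ⟨B, hBV, hB, isBlueClique_of_card_le_two (by omega)⟩
  by_cases hred : ∃ e ⊆ V, #e = 3 ∧ c e = true
  · obtain ⟨e, heV, he, hr⟩ := hred
    obtain ⟨Q, hQV, hQ, u, hu, v, hv, huv, hext⟩ := exists_extendable_pair hc heV he hr
    obtain ⟨B, hBV, hB, hBblue⟩ := ih (n - 2) (by omega) (V \ Q) (by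
      rw [card_sdiff_of_subset hQV]
      omega)
    have hBQ : Disjoint B Q := disjoint_of_subset_left hBV sdiff_disjoint
    have hvB : v ∉ B := fun h => disjoint_left.1 hBQ h hv
    have huvB : u ∉ insert v B := by
      rw [mem_insert, not_or]
      exact ⟨huv, fun h => disjoint_left.1 hBQ h hu⟩
    refine ⟨insert u (insert v B), insert_subset (hQV hu) (insert_subset (hQV hv)
      (hBV.trans sdiff_subset)), ?_, hext B (hBV.trans sdiff_subset) hBblue hBQ⟩
    rw [card_insert_of_notMem huvB, card_insert_of_notMem hvB]
    omega
  · obtain ⟨B, hBV, hB⟩ := exists_subset_card_eq (by omega : n ≤ #V)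
    refine ⟨B, hBV, hB, fun t ht ht3 => ?_⟩
    by_contra hrt
    exact hred ⟨t, ht.trans hBV, ht3, Bool.not_eq_false _ ▸ hrt⟩

end Coloring

section Embeddings

variable {α : Type*} [DecidableEq α] {c : Finset α → Bool}

lemma exists_loosePath_embedding_iff :
    (∃ f : ℕ → α, Set.InjOn f ↑(range 5) ∧ ∀ e ∈ P5, c (e.image f) = true) ↔
      ¬ RedLoosePathFree c := by
  constructor
  · rintro ⟨f, hf, hred⟩ hc
    have hinj : ∀ s ⊆ range 5, #(s.image f) = #s := fun s hs =>
      card_image_of_injOn (hf.mono (coe_subset.2 hs))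
    refine hc _ _ (hinj {0, 1, 2} (by decide)) (hinj {2, 3, 4} (by decide))
      (hred _ (Or.inl rfl)) (hred _ (Or.inr rfl)) ?_
    rw [← image_inter_of_injOn {0, 1, 2} {2, 3, 4} (by
      rw [← coe_union]
      exact hf.mono (coe_subset.2 (by decide)))]
    rfl
  · intro hc
    simp only [RedLoosePathFree, not_forall, ne_eq, not_not] at hc
    obtain ⟨e₁, e₂, he₁, he₂, hr₁, hr₂, hint⟩ := hc
    obtain ⟨m, hm⟩ := card_eq_one.1 hint
    have hm₁ : m ∈ e₁ := (mem_inter.1 (hm ▸ mem_singleton_self m)).1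
    have hm₂ : m ∈ e₂ := (mem_inter.1 (hm ▸ mem_singleton_self m)).2
    obtain ⟨a₁, a₂, -, ha⟩ := card_eq_two.1 (by rw [card_erase_of_mem hm₁, he₁] : #(e₁.erase m) = 2)
    obtain ⟨b₁, b₂, -, hb⟩ := card_eq_two.1 (by rw [card_erase_of_mem hm₂, he₂] : #(e₂.erase m) = 2)
    let f : ℕ → α := fun k => [a₁, a₂, m, b₁, b₂].getD k m
    have hf₁ : ({0, 1, 2} : Finset ℕ).image f = e₁ := by
      rw [← insert_erase hm₁, ha]
      ext x
      simp [f]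
      tauto
    have hf₂ : ({2, 3, 4} : Finset ℕ).image f = e₂ := by
      rw [← insert_erase hm₂, hb]
      simp [f]
    have hcard : #((range 5).image f) = #(range 5) := by
      have := card_union_add_card_inter e₁ e₂
      rw [card_range, show range 5 = {0, 1, 2} ∪ {2, 3, 4} by decide, image_union, hf₁, hf₂]
      rw [hint, he₁, he₂] at this
      omega
    refine ⟨f, injOn_of_card_image_eq hcard, ?_⟩
    rintro e (rfl | rfl)
    · rwa [hf₁]
    · rwa [hf₂]

lemma exists_clique_embedding_iff {n : ℕ} :
    (∃ g : Fin n → α, Function.Injective g ∧ ∀ e : Finset (Fin n), #e = 3 → c (e.image g) = false) ↔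
      ∃ B : Finset α, #B = n ∧ IsBlueClique c B := by
  constructor
  · rintro ⟨g, hg, hblue⟩
    refine ⟨univ.image g, by rw [card_image_of_injective _ hg, card_fin], fun t ht ht3 => ?_⟩
    obtain ⟨s, -, rfl⟩ := subset_image_iff.1 ht
    exact hblue s (by rwa [card_image_of_injective _ hg] at ht3)
  · rintro ⟨B, hB, hblue⟩
    let g : Fin n → α := fun i => (B.equivFinOfCardEq hB).symm i
    have hg : Function.Injective g := Subtype.val_injective.comp (Equiv.injective _)
    refine ⟨g, hg, fun e he => hblue _ (fun x hx => ?_) (by rwa [card_image_of_injective _ hg])⟩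
    obtain ⟨i, -, rfl⟩ := mem_image.1 hx
    exact ((B.equivFinOfCardEq hB).symm i).2

end Embeddings

lemma hRamseyOn_P5_eq (n : ℕ) :
    hRamseyOn 3 (range 5) P5 n = sInf {p | ∀ c : Finset (Fin p) → Bool,
      RedLoosePathFree c → ∃ B : Finset (Fin p), #B = n ∧ IsBlueClique c B} := by
  unfold hRamseyOn
  congr 1
  ext p
  refine forall_congr' fun c => ?_
  rw [exists_loosePath_embedding_iff, exists_clique_embedding_iff, or_iff_not_imp_left, not_not]

section BlockColoring

variable {q : ℕ}

def blockColoring (q : ℕ) (s : Finset (Fin q)) : Bool :=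
  decide (∀ x ∈ s, ∀ y ∈ s, (x : ℕ) / 4 = (y : ℕ) / 4)

lemma redLoosePathFree_blockColoring : RedLoosePathFree (blockColoring q) := by
  intro e₁ e₂ he₁ he₂ hr₁ hr₂ hint
  obtain ⟨m, hm⟩ := card_eq_one.1 hint
  have hm' := mem_inter.1 (hm ▸ mem_singleton_self m)
  have hblock : ∀ x ∈ e₁ ∪ e₂, (x : ℕ) / 4 = (m : ℕ) / 4 := by
    intro x hx
    rcases mem_union.1 hx with hx | hx
    · exact of_decide_eq_true hr₁ x hx m hm'.1
    · exact of_decide_eq_true hr₂ x hx m hm'.2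
  have hle : #(e₁ ∪ e₂) ≤ #(Ico (4 * ((m : ℕ) / 4)) (4 * ((m : ℕ) / 4) + 4)) :=
    card_le_card_of_injOn Fin.val (fun x hx => by
      have := hblock x hx
      simp only [coe_Ico, Set.mem_Ico]
      omega) Fin.val_injective.injOn
  have := card_union_add_card_inter e₁ e₂
  simp only [Nat.card_Ico] at hle
  omega

lemma card_le_of_card_filter_block_le_two {S : Finset (Fin q)}
    (hS : ∀ b, #{x ∈ S | x.val / 4 = b} ≤ 2) : #S ≤ 2 * (q / 4) + min 2 (q % 4) := by
  have hmaps : Set.MapsTo (fun x : Fin q => (x : ℕ) / 4) S (range (q / 4 + 1)) := fun x _ => by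
    simp only [coe_range, Set.mem_Iio]
    omega
  rw [card_eq_sum_card_fiberwise hmaps, sum_range_succ]
  have hfull : ∑ b ∈ range (q / 4), #{x ∈ S | x.val / 4 = b} ≤ 2 * (q / 4) := by
    simpa [mul_comm] using sum_le_card_nsmul (range (q / 4)) _ 2 fun b _ => hS b
  have hlast : #{x ∈ S | x.val / 4 = q / 4} ≤ #(Ico (4 * (q / 4)) q) :=
    card_le_card_of_injOn Fin.val (fun x hx => by
      have := (mem_filter.1 hx).2
      simp only [coe_Ico, Set.mem_Ico]
      omega) Fin.val_injective.injOn
  have := hS (q / 4)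
  simp only [Nat.card_Ico] at hlast
  omega

lemma IsBlueClique.card_le_of_blockColoring {B : Finset (Fin q)}
    (hB : IsBlueClique (blockColoring q) B) : #B ≤ 2 * (q / 4) + min 2 (q % 4) := by
  refine card_le_of_card_filter_block_le_two fun b => ?_
  by_contra! h
  obtain ⟨t, htB, ht⟩ := exists_subset_card_eq h
  have hred : blockColoring q t = true := decide_eq_true fun x hx y hy => by
    rw [(mem_filter.1 (htB hx)).2, (mem_filter.1 (htB hy)).2]
  simp [hB t (htB.trans (filter_subset _ _)) ht] at hred

end BlockColoring

theorem stmt_16_general (n : ℕ) :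
    hRamseyOn 3 (Finset.range 5) P5 n = if Even n then 2 * n - 2 else 2 * n - 1 := by
  have hN : (if Even n then 2 * n - 2 else 2 * n - 1) = 2 * n - 2 + n % 2 := by
    split_ifs with h
    · have := Nat.even_iff.1 h
      omega
    · have := Nat.odd_iff.1 (Nat.not_even_iff_odd.1 h)
      omega
  have hupper : ∀ c : Finset (Fin (2 * n - 2 + n % 2)) → Bool, RedLoosePathFree c →
      ∃ B : Finset (Fin (2 * n - 2 + n % 2)), #B = n ∧ IsBlueClique c B := fun c hc => by
    obtain ⟨B, -, hB⟩ := hc.exists_isBlueClique n univ (by simp)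
    exact ⟨B, hB⟩
  rw [hRamseyOn_P5_eq, hN]
  refine le_antisymm (Nat.sInf_le hupper) (le_csInf ⟨_, hupper⟩ fun q hq => ?_)
  by_contra! hq_lt
  obtain ⟨B, hB, hblue⟩ := hq _ redLoosePathFree_blockColoring
  have := hblue.card_le_of_blockColoring
  omega

theorem stmt_16 (n : ℕ) (hn : 3 ≤ n) :
    hRamseyOn 3 (Finset.range 5) P5 n = if Even n then 2 * n - 2 else 2 * n - 1 :=
  stmt_16_general n
end

section
/- For all j ≥ 2 and odd n ≥ 3, every 3-uniform tree T on 2j+1 vertices satisfies R(T, K_n^{(3)}; 3) = j(n−1) + 1; for even n ≥ 4, j(n−2) + 2 ≤ R(T, K_n^{(3)}; 3) ≤ j(n−1). -/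
/-!
Upper bound, by induction on the number of edges of the tree, on any vertex set `P` with
`|P| ≥ j(n-1) + (n mod 2)` and no blue `n`-set. Take a maximal blue set `B`, so `|B| ≤ n - 1`,
and embed the tree minus its first edge `e` redly into `P \ B`. Let `u` be the image of the
vertex where `e` is attached; by maximality `B ∪ {u}` is not blue, so `u` spans a red triple with
two vertices of `B`, which carries `e`.

The induction starts at two edges, where `|P| ≥ 2(n-1) + (n mod 2)`. Unless two red triples meet in
exactly one vertex, `P` splits into blocks closed under meeting red triples: a vertex on no red
triple, an isolated red triple, two red triples sharing a pair, or a sunflower of at least three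
red triples on a common pair. Keeping a blue part of each block yields a blue set of size
`blueBound |P| ≥ n`.

Lower bound: colour a triple red iff it lies in one block of `2j` consecutive vertices. A red tree
is connected, so it lies in one block, but it has `2j + 1` vertices; a blue set meets every block
in at most two vertices.
-/

open Finset

namespace HypertreeRamsey

section Trees

variable {V : Type*} [DecidableEq V]

def cover (l : List (Finset V)) : Finset V := l.foldr (· ∪ ·) ∅

@[simp] lemma cover_nil : cover ([] : List (Finset V)) = ∅ := rfl

@[simp] lemma cover_cons (e : Finset V) (l : List (Finset V)) :
    cover (e :: l) = e ∪ cover l := rfl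

lemma subset_cover {l : List (Finset V)} {e : Finset V} (he : e ∈ l) : e ⊆ cover l := by
  induction l with
  | nil => simp at he
  | cons f l ih =>
    rcases List.mem_cons.1 he with rfl | h
    · exact subset_union_left
    · exact (ih h).trans subset_union_right

lemma _root_.IsTreeList.card_cover_add_length {r : ℕ} {l : List (Finset V)} (hl : IsTreeList r l) :
    #(cover l) + l.length = r * l.length + 1 := by
  induction hl with
  | single e he => simp [he]
  | cons e l _ he hint ih =>
    have := card_union_add_card_inter e (cover l)
    change #(e ∩ cover l) = 1 at hint
    rw [cover_cons, List.length_cons, mul_add, mul_one]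
    omega

lemma _root_.IsTreeList.forall_eq_of_forall_mem_edge {r : ℕ} {l : List (Finset V)}
    (hl : IsTreeList r l) {β : Type*} (φ : V → β)
    (h : ∀ e ∈ l, ∀ x ∈ e, ∀ y ∈ e, φ x = φ y) : ∀ x ∈ cover l, ∀ y ∈ cover l, φ x = φ y := by
  induction hl with
  | single e he => simpa using h e (by simp)
  | cons e l _ he hint ih =>
    obtain ⟨v, hv⟩ := card_pos.1 (hint ▸ one_pos : 0 < #(e ∩ cover l))
    have hv' := mem_inter.1 hv
    have key : ∀ x ∈ e ∪ cover l, φ x = φ v := by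
      intro x hx
      rcases mem_union.1 hx with hx | hx
      · exact h e (by simp) x hx v hv'.1
      · exact ih (fun d hd => h d (by simp [hd])) x hx v hv'.2
    intro x hx y hy
    rw [key x hx, key y hy]

end Trees

section Colorings

variable {α : Type*}

def IsRedTriple (c : Finset α → Bool) (t : Finset α) : Prop := #t = 3 ∧ c t = true

def IsBlue (c : Finset α → Bool) (B : Finset α) : Prop := ∀ t ⊆ B, ¬ IsRedTriple c t

lemma isBlue_of_card_le_two {c : Finset α → Bool} {B : Finset α} (hB : #B ≤ 2) : IsBlue c B :=
  fun t ht htr => by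
    have := card_le_card ht
    rw [htr.1] at this
    omega

variable {V : Type*} [DecidableEq V] [DecidableEq α]

structure IsRedEmbedding (c : Finset α → Bool) (P : Finset α) (l : List (Finset V))
    (f : V → α) : Prop where
  injOn : Set.InjOn f (cover l)
  mapsTo : Set.MapsTo f (cover l) P
  red : ∀ e ∈ l, c (e.image f) = true

variable {c : Finset α → Bool}

lemma exists_eq_triple_of_mem {t : Finset α} (ht : #t = 3) {a : α} (ha : a ∈ t) :
    ∃ x y, x ≠ a ∧ y ≠ a ∧ x ≠ y ∧ t = {a, x, y} := by
  obtain ⟨x, y, hxy, hxy'⟩ := card_eq_two.1 (show #(t.erase a) = 2 by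
    rw [card_erase_of_mem ha, ht])
  have hx : x ∈ t.erase a := by simp [hxy']
  have hy : y ∈ t.erase a := by simp [hxy']
  exact ⟨x, y, ne_of_mem_erase hx, ne_of_mem_erase hy, hxy, by rw [← insert_erase ha, hxy']⟩

lemma exists_maximal_isBlue (c : Finset α → Bool) (P : Finset α) :
    ∃ B ⊆ P, IsBlue c B ∧ ∀ w ∈ P \ B, ¬ IsBlue c (insert w B) := by
  classical
  obtain ⟨B, hB, hmax⟩ := exists_max_image (P.powerset.filter (IsBlue c)) card
    ⟨∅, by simpa using isBlue_of_card_le_two (by simp)⟩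
  rw [mem_filter, mem_powerset] at hB
  refine ⟨B, hB.1, hB.2, fun w hw hblue => ?_⟩
  rw [mem_sdiff] at hw
  have := hmax (insert w B) (by simpa [insert_subset_iff, hw.1, hB.1] using hblue)
  rw [card_insert_of_notMem hw.2] at this
  omega

lemma IsBlue.exists_of_not_isBlue_insert {B : Finset α} {w : α} (hB : IsBlue c B)
    (hw : ¬ IsBlue c (insert w B)) : ∃ x ∈ B, ∃ y ∈ B, x ≠ y ∧ c {w, x, y} = true := by
  simp only [IsBlue, not_forall, not_not] at hw
  obtain ⟨t, ht, htr⟩ := hw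
  have hwt : w ∈ t := by
    by_contra hwt
    exact hB t ((subset_insert_iff_of_notMem hwt).1 ht) htr
  obtain ⟨x, y, hxw, hyw, hxy, rfl⟩ := exists_eq_triple_of_mem htr.1 hwt
  have hB' : ∀ z ∈ ({w, x, y} : Finset α), z ≠ w → z ∈ B := fun z hz hzw =>
    (mem_insert.1 (ht hz)).resolve_left hzw
  exact ⟨x, hB' x (by simp) hxw, y, hB' y (by simp) hyw, hxy, htr.2⟩

lemma exists_extend_injOn {U e : Finset V} {v : V} {f : V → α} (hf : Set.InjOn f U)
    (he : #e = 3) (hv : e ∩ U = {v}) {x y : α} (hxy : x ≠ y) (hx : x ∉ f '' U)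
    (hy : y ∉ f '' U) :
    ∃ f' : V → α, Set.EqOn f' f U ∧ Set.InjOn f' ↑(e ∪ U) ∧ e.image f' = {f v, x, y} := by
  have hvU : v ∈ e ∩ U := hv ▸ mem_singleton_self v
  obtain ⟨a, b, hav, hbv, hab, rfl⟩ := exists_eq_triple_of_mem he (mem_inter.1 hvU).1
  have hnotU : ∀ z ∈ ({v, a, b} : Finset V), z ≠ v → z ∉ U := fun z hz hzv hzU =>
    hzv (mem_singleton.1 (hv ▸ mem_inter.2 ⟨hz, hzU⟩))
  have haU := hnotU a (by simp) hav
  have hbU := hnotU b (by simp) hbv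
  have hEq : Set.EqOn (Function.update (Function.update f b y) a x) f U := fun z hz => by
    rw [Function.update_of_ne (ne_of_mem_of_not_mem hz haU),
      Function.update_of_ne (ne_of_mem_of_not_mem hz hbU)]
  refine ⟨Function.update (Function.update f b y) a x, hEq, ?_, ?_⟩
  · have hvU' := (mem_inter.1 hvU).2
    have hdom : (↑({v, a, b} ∪ U) : Set V) = insert a (insert b ↑U) := by
      ext z
      simp only [coe_union, coe_insert, coe_singleton, Set.mem_union, Set.mem_insert_iff,
        Set.mem_singleton_iff, mem_coe]
      constructor
      · rintro ((rfl | rfl | rfl) | hz)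
        exacts [Or.inr (Or.inr hvU'), Or.inl rfl, Or.inr (Or.inl rfl), Or.inr (Or.inr hz)]
      · rintro (rfl | rfl | hz) <;> simp [*]
    rw [hdom, Set.injOn_insert (by simp [hab, haU]), Set.injOn_insert (by simpa using hbU),
      hEq.injOn_iff, Set.image_insert_eq, hEq.image_eq]
    simp [Function.update_of_ne hab.symm, hf, hx, hy, hxy]
  · simp [Function.update_of_ne hav.symm, Function.update_of_ne hbv.symm,
      Function.update_of_ne hab.symm]

lemma IsRedEmbedding.exists_cons {P P' : Finset α} {l : List (Finset V)} {f : V → α}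
    (hf : IsRedEmbedding c P' l f) (hP' : P' ⊆ P) {e : Finset V} {v : V} (he : #e = 3)
    (hv : e ∩ cover l = {v}) {x y : α} (hxy : x ≠ y) (hx : x ∈ P \ P') (hy : y ∈ P \ P')
    (hc : c {f v, x, y} = true) : ∃ f', IsRedEmbedding c P (e :: l) f' := by
  have hv' : v ∈ cover l := (mem_inter.1 (hv ▸ mem_singleton_self v)).2
  have hnot : ∀ z ∈ P \ P', z ∉ f '' ↑(cover l) := by
    rintro z hz ⟨w, hw, rfl⟩
    exact (mem_sdiff.1 hz).2 (hf.mapsTo hw)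
  obtain ⟨f', hEq, hinj, himage⟩ :=
    exists_extend_injOn hf.injOn he hv hxy (hnot x hx) (hnot y hy)
  have himage_eq : ∀ d ⊆ cover l, d.image f' = d.image f := fun d hd =>
    image_congr fun w hw => hEq (hd hw)
  refine ⟨f', hinj, fun w hw => ?_, ?_⟩
  · rcases mem_union.1 hw with hw | hw
    · have : f' w ∈ e.image f' := mem_image_of_mem f' hw
      rw [himage] at this
      simp only [mem_insert, mem_singleton] at this
      rcases this with h | h | h <;> rw [h]
      exacts [hP' (hf.mapsTo hv'), (mem_sdiff.1 hx).1, (mem_sdiff.1 hy).1]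
    · rw [hEq hw]
      exact hP' (hf.mapsTo hw)
  · intro d hd
    rcases List.mem_cons.1 hd with rfl | hd
    · rwa [himage]
    · rw [himage_eq d (subset_cover hd)]
      exact hf.red d hd

end Colorings

-- The least total size of the blue parts over partitions of `m` vertices into splitting blocks,
-- which keep 1, 2, 2 and `s - 1` blue vertices out of 1, 3, 4 and `s ≥ 5`.
def blueBound (m : ℕ) : ℕ := (m + 1) / 2 + if m % 4 = 2 then 1 else 0

lemma blueBound_succ_le (m : ℕ) : blueBound (m + 1) ≤ blueBound m + 1 := by
  unfold blueBound; split_ifs <;> omega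

lemma blueBound_add_four (m : ℕ) : blueBound (m + 4) = blueBound m + 2 := by
  unfold blueBound; split_ifs <;> omega

lemma blueBound_add_le (m : ℕ) {s : ℕ} (hs : 3 ≤ s) :
    blueBound (m + s) ≤ blueBound m + (s - 1) := by
  induction s, hs using Nat.le_induction with
  | base => unfold blueBound; split_ifs <;> omega
  | succ s hs ih =>
    have := blueBound_succ_le (m + s)
    rw [← add_assoc]
    omega

lemma blueBound_mono : Monotone blueBound :=
  monotone_nat_of_le_succ fun m => by unfold blueBound; split_ifs <;> omega

lemma le_blueBound (n : ℕ) : n ≤ blueBound (2 * (n - 1) + n % 2) := by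
  obtain ⟨k, rfl | rfl⟩ := Nat.even_or_odd' n <;> unfold blueBound <;> split_ifs <;> omega

section Bowtie

variable {α : Type*} [DecidableEq α] {c : Finset α → Bool} {P : Finset α}

def NoRedBowtie (c : Finset α → Bool) (P : Finset α) : Prop :=
  ∀ t₁ ⊆ P, ∀ t₂ ⊆ P, IsRedTriple c t₁ → IsRedTriple c t₂ → #(t₁ ∩ t₂) ≠ 1

def IsRedClosed (c : Finset α → Bool) (P W : Finset α) : Prop :=
  ∀ t ⊆ P, IsRedTriple c t → (t ∩ W).Nonempty → t ⊆ W

structure IsSplittingBlock (c : Finset α → Bool) (P W : Finset α) : Prop where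
  subset : W ⊆ P
  nonempty : W.Nonempty
  isRedClosed : IsRedClosed c P W
  exists_isBlue : ∃ T ⊆ W, IsBlue c T ∧ ∀ m, blueBound (m + #W) ≤ blueBound m + #T

lemma NoRedBowtie.mono {P' : Finset α} (hP : NoRedBowtie c P) (h : P' ⊆ P) :
    NoRedBowtie c P' := fun t₁ h₁ t₂ h₂ => hP t₁ (h₁.trans h) t₂ (h₂.trans h)

lemma NoRedBowtie.card_inter_eq_two (hP : NoRedBowtie c P) {t s : Finset α} (ht : t ⊆ P)
    (hs : s ⊆ P) (htr : IsRedTriple c t) (hsr : IsRedTriple c s) (hne : (t ∩ s).Nonempty)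
    (hts : ¬ t ⊆ s) : #(t ∩ s) = 2 := by
  have h1 := hP t ht s hs htr hsr
  have h3 : #(t ∩ s) < 3 :=
    htr.1 ▸ card_lt_card ⟨inter_subset_left, fun h => hts (h.trans inter_subset_right)⟩
  have := hne.card_pos
  omega

lemma IsBlue.union_of_isRedClosed {W T S : Finset α} (hW : IsRedClosed c P W) (hWP : W ⊆ P)
    (hT : IsBlue c T) (hTW : T ⊆ W) (hS : IsBlue c S) (hSW : S ⊆ P \ W) :
    IsBlue c (T ∪ S) := by
  intro t ht htr
  have hSP : S ⊆ P := hSW.trans sdiff_subset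
  by_cases hmeet : (t ∩ W).Nonempty
  · have htW := hW t (ht.trans (union_subset (hTW.trans hWP) hSP)) htr hmeet
    refine hT t (fun x hx => (mem_union.1 (ht hx)).resolve_right fun hxS => ?_) htr
    exact (mem_sdiff.1 (hSW hxS)).2 (htW hx)
  · refine hS t (fun x hx => (mem_union.1 (ht hx)).resolve_left fun hxT => ?_) htr
    exact hmeet ⟨x, mem_inter.2 ⟨hx, hTW hxT⟩⟩

lemma isSplittingBlock_of_isRedClosed_triple {e : Finset α} (he : e ⊆ P)
    (her : IsRedTriple c e) (hcl : IsRedClosed c P e) : IsSplittingBlock c P e := by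
  obtain ⟨T, hTe, hT⟩ := exists_subset_card_eq (show 2 ≤ #e by rw [her.1]; omega)
  refine ⟨he, card_pos.1 (by rw [her.1]; omega), hcl, T, hTe, isBlue_of_card_le_two hT.le,
    fun m => ?_⟩
  rw [her.1, hT]
  exact blueBound_add_le m le_rfl

lemma isSplittingBlock_of_isRedClosed_union {e f : Finset α} (he : e ⊆ P) (hf : f ⊆ P)
    (her : IsRedTriple c e) (hfr : IsRedTriple c f) (hef : #(e ∩ f) = 2)
    (hcl : IsRedClosed c P (e ∪ f)) : IsSplittingBlock c P (e ∪ f) := by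
  have hcard : #(e ∪ f) = 4 := by
    have := card_union_add_card_inter e f
    rw [her.1, hfr.1, hef] at this
    omega
  refine ⟨union_subset he hf, card_pos.1 (by omega), hcl, e ∩ f,
    inter_subset_left.trans subset_union_left, isBlue_of_card_le_two hef.le, fun m => ?_⟩
  rw [hcard, hef, blueBound_add_four]

def petals (c : Finset α → Bool) (P pr : Finset α) : Finset α :=
  (P \ pr).filter fun z => c (insert z pr) = true

lemma exists_mem_petals_eq_insert {pr t : Finset α} (hpr : #pr = 2) (ht : t ⊆ P)
    (htr : IsRedTriple c t) (hprt : pr ⊆ t) : ∃ z ∈ petals c P pr, t = insert z pr := by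
  obtain ⟨z, hz, rfl⟩ := exists_eq_insert_iff.2 ⟨hprt, by rw [hpr, htr.1]⟩
  exact ⟨z, mem_filter.2 ⟨mem_sdiff.2 ⟨ht (mem_insert_self z pr), hz⟩, htr.2⟩, rfl⟩

lemma isRedTriple_insert_of_mem_petals {pr : Finset α} {z : α} (hpr : #pr = 2)
    (hz : z ∈ petals c P pr) : IsRedTriple c (insert z pr) := by
  obtain ⟨hz, hc⟩ := mem_filter.1 hz
  exact ⟨by rw [card_insert_of_notMem (mem_sdiff.1 hz).2, hpr], hc⟩

lemma three_le_card_petals {pr e f g : Finset α} (hpr : #pr = 2) (he : e ⊆ P) (hf : f ⊆ P)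
    (hg : g ⊆ P) (her : IsRedTriple c e) (hfr : IsRedTriple c f) (hgr : IsRedTriple c g)
    (hpre : pr ⊆ e) (hprf : pr ⊆ f) (hprg : pr ⊆ g) (hef : e ≠ f) (heg : e ≠ g)
    (hfg : f ≠ g) : 3 ≤ #(petals c P pr) := by
  have hsub : {e, f, g} ⊆ (petals c P pr).image (insert · pr) := by
    intro t ht
    simp only [mem_insert, mem_singleton] at ht
    obtain ⟨z, hz, rfl⟩ : ∃ z ∈ petals c P pr, t = insert z pr := by
      rcases ht with rfl | rfl | rfl
      exacts [exists_mem_petals_eq_insert hpr he her hpre,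
        exists_mem_petals_eq_insert hpr hf hfr hprf, exists_mem_petals_eq_insert hpr hg hgr hprg]
    exact mem_image_of_mem _ hz
  calc 3 = #{e, f, g} := (card_eq_three.2 ⟨e, f, g, hef, heg, hfg, rfl⟩).symm
    _ ≤ _ := card_le_card hsub
    _ ≤ _ := card_image_le

lemma NoRedBowtie.subset_of_meets_sunflower (hP : NoRedBowtie c P) {pr t : Finset α}
    (hprP : pr ⊆ P) (hpr : #pr = 2) (hZ : 3 ≤ #(petals c P pr)) (ht : t ⊆ P)
    (htr : IsRedTriple c t) (hmeet : (t ∩ (pr ∪ petals c P pr)).Nonempty) : pr ⊆ t := by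
  set Z := petals c P pr
  by_contra hprt
  have hZpr : ∀ z ∈ Z, z ∉ pr := fun z hz => (mem_sdiff.1 (mem_filter.1 hz).1).2
  have hle : #(t ∩ pr) ≤ 1 := by
    have : #(t ∩ pr) < #pr :=
      card_lt_card ⟨inter_subset_right, fun h => hprt (h.trans inter_subset_left)⟩
    omega
  -- a petal whose triple meets `t` in exactly one point
  obtain ⟨z, hz, hzt⟩ : ∃ z ∈ Z, (z ∈ t ↔ t ∩ pr = ∅) := by
    by_cases h0 : t ∩ pr = ∅
    · obtain ⟨w, hw⟩ := hmeet
      obtain ⟨hwt, hw⟩ := mem_inter.1 hw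
      have hwpr : w ∉ pr := fun h => by simpa [h0] using mem_inter.2 ⟨hwt, h⟩
      exact ⟨w, (mem_union.1 hw).resolve_left hwpr, iff_of_true hwt h0⟩
    · have hZt : ¬ Z ⊆ t := fun hZt => by
        have : Z ⊆ t \ pr := fun z hz => mem_sdiff.2 ⟨hZt hz, hZpr z hz⟩
        have h1 := card_le_card this
        have h2 := card_sdiff_add_card_inter t pr
        have h3 := (nonempty_iff_ne_empty.2 h0).card_pos
        rw [htr.1] at h2
        omega
      obtain ⟨z, hz, hzt⟩ := not_subset.1 hZt
      exact ⟨z, hz, iff_of_false hzt h0⟩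
  have hcard : #(t ∩ insert z pr) = 1 := by
    by_cases hzt' : z ∈ t
    · rw [inter_insert_of_mem hzt', hzt.1 hzt']
      rfl
    · rw [inter_insert_of_notMem hzt']
      have := (nonempty_iff_ne_empty.2 (mt hzt.2 hzt')).card_pos
      omega
  exact hP t ht _ (insert_subset (mem_sdiff.1 (mem_filter.1 hz).1).1 hprP) htr
    (isRedTriple_insert_of_mem_petals hpr hz) hcard

lemma NoRedBowtie.isSplittingBlock_sunflower (hP : NoRedBowtie c P) {pr : Finset α}
    (hprP : pr ⊆ P) (hpr : #pr = 2) (hZ : 3 ≤ #(petals c P pr)) :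
    IsSplittingBlock c P (pr ∪ petals c P pr) := by
  set Z := petals c P pr
  have hZP : Z ⊆ P := (filter_subset _ _).trans sdiff_subset
  have hWP : pr ∪ Z ⊆ P := union_subset hprP hZP
  have hcore := fun t => hP.subset_of_meets_sunflower hprP hpr hZ (t := t)
  obtain ⟨y, hy⟩ := card_pos.1 (show 0 < #pr by omega)
  refine ⟨hWP, ⟨y, mem_union_left _ hy⟩, fun t ht htr hmeet => ?_, (pr ∪ Z).erase y,
    erase_subset _ _, fun t ht htr => ?_, fun m => ?_⟩
  · obtain ⟨z, hz, rfl⟩ := exists_mem_petals_eq_insert hpr ht htr (hcore t ht htr hmeet)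
    exact insert_subset (mem_union_right _ hz) subset_union_left
  · have htW := ht.trans (erase_subset _ _)
    have hmeet : (t ∩ (pr ∪ Z)).Nonempty := by
      rw [inter_eq_left.2 htW]
      exact card_pos.1 (by rw [htr.1]; omega)
    exact notMem_erase y _ (ht (hcore t (htW.trans hWP) htr hmeet hy))
  · have hdisj : Disjoint pr Z := disjoint_right.2 fun z hz => (mem_sdiff.1 (mem_filter.1 hz).1).2
    rw [card_erase_of_mem (mem_union_left _ hy), card_union_of_disjoint hdisj]
    exact blueBound_add_le m (by omega)

lemma NoRedBowtie.inter_subset_of_meets (hP : NoRedBowtie c P) {e f g : Finset α}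
    (he : e ⊆ P) (hf : f ⊆ P) (hg : g ⊆ P) (her : IsRedTriple c e) (hfr : IsRedTriple c f)
    (hgr : IsRedTriple c g) (hef : #(e ∩ f) = 2) (hge : (g ∩ e).Nonempty)
    (hgQ : ¬ g ⊆ e ∪ f) : e ∩ f ⊆ g := by
  have hge2 := hP.card_inter_eq_two hg he hgr her hge fun h => hgQ (h.trans subset_union_left)
  have hgQ2 : #(g ∩ (e ∪ f)) < 3 :=
    hgr.1 ▸ card_lt_card ⟨inter_subset_left, fun h => hgQ (h.trans inter_subset_right)⟩
  have hgQe : g ∩ e = g ∩ (e ∪ f) :=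
    eq_of_subset_of_card_le (inter_subset_inter_left subset_union_left) (by omega)
  have hgf : (g ∩ f).Nonempty := by
    rw [nonempty_iff_ne_empty]
    intro h
    have hsub : g ∩ e ⊆ e \ f := fun x hx => mem_sdiff.2 ⟨(mem_inter.1 hx).2, fun hxf => by
      simpa [h] using mem_inter.2 ⟨(mem_inter.1 hx).1, hxf⟩⟩
    have h1 := card_le_card hsub
    have h2 := card_sdiff_add_card_inter e f
    rw [her.1] at h2
    omega
  have hgf2 := hP.card_inter_eq_two hg hf hgr hfr hgf fun h => hgQ (h.trans subset_union_right)
  have hsub : g ∩ f ⊆ e ∩ f := fun x hx => by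
    have : x ∈ g ∩ e :=
      hgQe ▸ mem_inter.2 ⟨(mem_inter.1 hx).1, mem_union_right _ (mem_inter.1 hx).2⟩
    exact mem_inter.2 ⟨(mem_inter.1 this).2, (mem_inter.1 hx).2⟩
  rw [← eq_of_subset_of_card_le hsub (by omega)]
  exact inter_subset_left

lemma NoRedBowtie.exists_isSplittingBlock (hP : NoRedBowtie c P) (hne : P.Nonempty) :
    ∃ W, IsSplittingBlock c P W := by
  by_cases hred : ∃ e ⊆ P, IsRedTriple c e
  swap
  · push Not at hred
    obtain ⟨w, hw⟩ := hne
    exact ⟨{w}, singleton_subset_iff.2 hw, singleton_nonempty w,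
      fun t ht htr _ => absurd htr (hred t ht), {w}, subset_rfl,
      isBlue_of_card_le_two (by simp), fun m => by simpa using blueBound_succ_le m⟩
  obtain ⟨e, he, her⟩ := hred
  by_cases hcl : IsRedClosed c P e
  · exact ⟨e, isSplittingBlock_of_isRedClosed_triple he her hcl⟩
  simp only [IsRedClosed, not_forall] at hcl
  obtain ⟨f, hf, hfr, hfe, hfne⟩ := hcl
  have hef : #(e ∩ f) = 2 := by
    rw [inter_comm]
    exact hP.card_inter_eq_two hf he hfr her hfe hfne
  by_cases hQ : IsRedClosed c P (e ∪ f)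
  · exact ⟨e ∪ f, isSplittingBlock_of_isRedClosed_union he hf her hfr hef hQ⟩
  simp only [IsRedClosed, not_forall] at hQ
  obtain ⟨g, hg, hgr, hgQ, hgne⟩ := hQ
  have hprg : e ∩ f ⊆ g := by
    obtain ⟨w, hw⟩ := hgQ
    rcases mem_union.1 (mem_inter.1 hw).2 with hwe | hwf
    · exact hP.inter_subset_of_meets he hf hg her hfr hgr hef
        ⟨w, mem_inter.2 ⟨(mem_inter.1 hw).1, hwe⟩⟩ hgne
    · rw [inter_comm]
      exact hP.inter_subset_of_meets hf he hg hfr her hgr (by rwa [inter_comm])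
        ⟨w, mem_inter.2 ⟨(mem_inter.1 hw).1, hwf⟩⟩ (by rwa [union_comm])
  exact ⟨_, hP.isSplittingBlock_sunflower (inter_subset_left.trans he) hef
    (three_le_card_petals hef he hf hg her hfr hgr inter_subset_left inter_subset_right hprg
      (fun h => hfne (h ▸ subset_rfl)) (fun h => hgne (h ▸ subset_union_left))
      (fun h => hgne (h ▸ subset_union_right)))⟩

theorem NoRedBowtie.exists_isBlue_blueBound_le (hP : NoRedBowtie c P) :
    ∃ S ⊆ P, IsBlue c S ∧ blueBound #P ≤ #S := by
  induction P using strongInduction with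
  | H P ih =>
  rcases P.eq_empty_or_nonempty with rfl | hne
  · exact ⟨∅, subset_rfl, isBlue_of_card_le_two (by simp), by simp [blueBound]⟩
  obtain ⟨W, hW⟩ := hP.exists_isSplittingBlock hne
  obtain ⟨T, hTW, hT, hbound⟩ := hW.exists_isBlue
  obtain ⟨S, hS, hSb, hScard⟩ :=
    ih (P \ W) (sdiff_ssubset hW.subset hW.nonempty) (hP.mono sdiff_subset)
  refine ⟨T ∪ S, union_subset (hTW.trans hW.subset) (hS.trans sdiff_subset),
    hT.union_of_isRedClosed hW.isRedClosed hW.subset hTW hSb hS, ?_⟩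
  have hdisj : Disjoint T S :=
    disjoint_left.2 fun x hxT hxS => (mem_sdiff.1 (hS hxS)).2 (hTW hxT)
  have := hbound #(P \ W)
  rw [card_sdiff_add_card_eq_card hW.subset] at this
  rw [card_union_of_disjoint hdisj]
  omega

end Bowtie

section UpperBound

variable {V α : Type*} [DecidableEq V] [DecidableEq α] {c : Finset α → Bool}

lemma exists_isRedEmbedding_pair {e e₂ : Finset V} {v : V} (he : #e = 3) (he₂ : #e₂ = 3)
    (hv : e ∩ e₂ = {v}) {P : Finset α} (hP : ¬ NoRedBowtie c P) :
    ∃ f, IsRedEmbedding c P [e, e₂] f := by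
  simp only [NoRedBowtie, not_forall, not_not] at hP
  obtain ⟨E₁, hE₁, E₂, hE₂, hE₁r, hE₂r, hE⟩ := hP
  obtain ⟨w, hw⟩ := card_eq_one.1 hE
  have hw₁ : w ∈ E₁ := (mem_inter.1 (hw ▸ mem_singleton_self w)).1
  have hw₂ : w ∈ E₂ := (mem_inter.1 (hw ▸ mem_singleton_self w)).2
  have hve₂ : v ∈ e₂ := (mem_inter.1 (hv ▸ mem_singleton_self v)).2
  obtain ⟨x₂, y₂, hx₂, hy₂, hxy₂, hE₂eq⟩ := exists_eq_triple_of_mem hE₂r.1 hw₂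
  obtain ⟨f, hfv, hfinj, hfimage⟩ :=
    exists_extend_injOn (f := fun _ => w) (by simp) he₂
      (inter_singleton_of_mem hve₂) hxy₂ (by simpa using hx₂) (by simpa using hy₂)
  have hf : IsRedEmbedding c E₂ [e₂] f := by
    have hcover : cover [e₂] = e₂ := by simp
    refine ⟨?_, fun u hu => ?_, ?_⟩
    · rw [hcover]
      exact hfinj.mono (by simp)
    · rw [hcover] at hu
      rw [hE₂eq, ← hfimage]
      exact mem_image_of_mem f hu
    · simpa [hfimage, ← hE₂eq] using hE₂r.2
  obtain ⟨x, y, hx, hy, hxy, hE₁eq⟩ := exists_eq_triple_of_mem hE₁r.1 hw₁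
  have hout : ∀ z ∈ E₁, z ≠ w → z ∈ P \ E₂ := fun z hz hzw =>
    mem_sdiff.2 ⟨hE₁ hz, fun hz₂ => hzw (mem_singleton.1 (hw ▸ mem_inter.2 ⟨hz, hz₂⟩))⟩
  refine hf.exists_cons hE₂ he (by simpa using hv) hxy (hout x (by simp [hE₁eq]) hx)
    (hout y (by simp [hE₁eq]) hy) ?_
  rw [hfv (mem_coe.2 (mem_singleton_self v)), ← hE₁eq]
  exact hE₁r.2

theorem _root_.IsTreeList.exists_isRedEmbedding {l : List (Finset V)} (hl : IsTreeList 3 l)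
    (hlen : 2 ≤ l.length) {n : ℕ} {P : Finset α} (hP : l.length * (n - 1) + n % 2 ≤ #P)
    (hblue : ∀ B ⊆ P, IsBlue c B → #B < n) : ∃ f, IsRedEmbedding c P l f := by
  induction hl generalizing P with
  | single e he => simp at hlen
  | cons e l hl he hint ih =>
    obtain ⟨v, hv⟩ := card_eq_one.1 hint
    cases hl with
    | single e₂ he₂ =>
      refine exists_isRedEmbedding_pair he he₂ (by simpa using hv) fun hbow => ?_
      obtain ⟨S, hSP, hS, hcard⟩ := hbow.exists_isBlue_blueBound_le
      have := blueBound_mono (show 2 * (n - 1) + n % 2 ≤ #P by simpa using hP)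
      have := le_blueBound n
      have := hblue S hSP hS
      omega
    | cons e₂ l' hl' he₂ hint₂ =>
      obtain ⟨B, hBP, hB, hBmax⟩ := exists_maximal_isBlue c P
      have hBn := hblue B hBP hB
      obtain ⟨f, hf⟩ := ih (by cases hl' <;> simp) (P := P \ B)
        (by
          rw [card_sdiff_of_subset hBP]
          simp only [List.length_cons, add_mul, one_mul] at hP ⊢
          omega)
        fun B' hB' => hblue B' (hB'.trans sdiff_subset)
      have hfv : f v ∈ P \ B := hf.mapsTo (mem_inter.1 (hv ▸ mem_singleton_self v)).2
      obtain ⟨x, hx, y, hy, hxy, hc⟩ := hB.exists_of_not_isBlue_insert (hBmax _ hfv)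
      exact hf.exists_cons sdiff_subset he hv hxy (by simp [hBP hx, hx]) (by simp [hBP hy, hy]) hc

end UpperBound

section LowerBound

variable {V α β : Type*} [DecidableEq V] [DecidableEq β]

def blockColoring (b : α → β) (t : Finset α) : Bool := decide (∀ x ∈ t, ∀ y ∈ t, b x = b y)

lemma IsBlue.card_filter_le_two {b : α → β} {B : Finset α} (hB : IsBlue (blockColoring b) B)
    (z : β) : #(B.filter (b · = z)) ≤ 2 := by
  by_contra h
  obtain ⟨t, ht, ht3⟩ := exists_subset_card_eq (show 3 ≤ #(B.filter (b · = z)) by omega)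
  refine hB t (ht.trans (filter_subset _ _)) ⟨ht3, ?_⟩
  simp only [blockColoring, decide_eq_true_eq]
  intro x hx y hy
  rw [(mem_filter.1 (ht hx)).2, (mem_filter.1 (ht hy)).2]

lemma card_le_of_forall_div_eq {k : ℕ} (hk : 0 < k) {s : Finset ℕ}
    (h : ∀ x ∈ s, ∀ y ∈ s, x / k = y / k) : #s ≤ k := by
  simpa using card_le_card_of_injOn (t := range k) (· % k)
    (fun x _ => by simpa using Nat.mod_lt x hk) fun x hx y hy hxy => by
      rw [← Nat.div_add_mod x k, ← Nat.div_add_mod y k, h x hx y hy]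
      exact congrArg _ hxy

lemma _root_.IsTreeList.card_cover_le_of_blockColoring {r : ℕ} {l : List (Finset V)}
    (hl : IsTreeList r l) {p k : ℕ} (hk : 0 < k) {f : V → Fin p} (hf : Set.InjOn f (cover l))
    (hred : ∀ e ∈ l, blockColoring (fun x : Fin p => (x : ℕ) / k) (e.image f) = true) :
    #(cover l) ≤ k := by
  have hconst := hl.forall_eq_of_forall_mem_edge (fun w => (f w : ℕ) / k) fun e he x hx y hy => by
    have := hred e he
    simp only [blockColoring, decide_eq_true_eq, forall_mem_image] at this
    exact this hx hy
  rw [← card_image_of_injOn (f := fun w => (f w : ℕ)) (Fin.val_injective.comp_injOn hf)]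
  exact card_le_of_forall_div_eq hk (by simpa using hconst)

lemma IsBlue.card_le_of_blockColoring_div {p k : ℕ} {B : Finset (Fin p)}
    (hB : IsBlue (blockColoring fun x : Fin p => (x : ℕ) / k) B) (q : ℕ) :
    #B ≤ 2 * q + (p - k * q) := by
  rw [← card_filter_add_card_filter_not (s := B) fun x : Fin p => (x : ℕ) < k * q]
  gcongr ?_ + ?_
  · calc _ ≤ 2 * #(range q) := card_le_mul_card_image_of_maps_to
          (f := fun x : Fin p => (x : ℕ) / k)
          (fun x hx => mem_range.2 (Nat.div_lt_of_lt_mul (mem_filter.1 hx).2)) 2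
          fun z _ => (hB.card_filter_le_two z).trans' (card_le_card (filter_subset_filter _
            (filter_subset _ _)))
      _ = 2 * q := by rw [card_range]
  · calc _ ≤ #(Ico (k * q) p) := card_le_card_of_injOn (fun x : Fin p => (x : ℕ))
          (fun x hx => by simpa using (mem_filter.1 hx).2) Fin.val_injective.injOn
      _ = p - k * q := Nat.card_Ico _ _

end LowerBound

section Ramsey

def RamseyArrows {V : Type*} (E : Set (Finset V)) (r n p : ℕ) : Prop :=
  ∀ c : Finset (Fin p) → Bool,
    (∃ f : V → Fin p, Function.Injective f ∧ ∀ e ∈ E, c (e.image f) = true) ∨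
    (∃ g : Fin n → Fin p, Function.Injective g ∧
      ∀ e : Finset (Fin n), e.card = r → c (e.image g) = false)

variable {V : Type*} [DecidableEq V]

lemma hRamsey_le {E : Set (Finset V)} {r n p : ℕ} (h : RamseyArrows E r n p) :
    hRamsey E r n ≤ p :=
  Nat.sInf_le h

/-- `hRamsey` is `0` when no `p` works, so a lower bound needs some `p` that does. -/
lemma le_hRamsey {E : Set (Finset V)} {r n p L : ℕ} (h : RamseyArrows E r n p)
    (hL : ∀ p' < L, ¬ RamseyArrows E r n p') : L ≤ hRamsey E r n :=
  not_lt.1 fun hlt => hL _ hlt (Nat.sInf_mem (s := {p | RamseyArrows E r n p}) ⟨p, h⟩)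

theorem ramseyArrows_of_le [Fintype V] {l : List (Finset V)} (hl : IsTreeList 3 l)
    (hcover : cover l = univ) (hlen : 2 ≤ l.length) {n p : ℕ}
    (hp : l.length * (n - 1) + n % 2 ≤ p) : RamseyArrows {e | e ∈ l} 3 n p := by
  intro c
  by_cases hblue : ∀ B ⊆ (univ : Finset (Fin p)), IsBlue c B → #B < n
  · obtain ⟨f, hf⟩ := hl.exists_isRedEmbedding hlen (by simpa using hp) hblue
    refine Or.inl ⟨f, ?_, hf.red⟩
    simpa [hcover] using hf.injOn
  · push Not at hblue
    obtain ⟨B, -, hB, hBn⟩ := hblue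
    obtain ⟨B', hB'B, hB'n⟩ := exists_subset_card_eq hBn
    have hg := (B'.orderEmbOfFin hB'n).injective
    refine Or.inr ⟨_, hg, fun e he => ?_⟩
    have hsub : e.image (B'.orderEmbOfFin hB'n) ⊆ B := fun x hx => by
      obtain ⟨i, -, rfl⟩ := mem_image.1 hx
      exact hB'B (orderEmbOfFin_mem B' hB'n i)
    simpa [IsRedTriple, card_image_of_injective _ hg, he] using hB _ hsub

theorem not_ramseyArrows [Fintype V] {r : ℕ} {l : List (Finset V)} (hl : IsTreeList r l)
    (hcover : cover l = univ) {k : ℕ} (hk : 0 < k) (hV : k < Fintype.card V) {q n p : ℕ}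
    (hp : 2 * q + (p - k * q) < n) : ¬ RamseyArrows {e | e ∈ l} 3 n p := by
  intro h
  rcases h (blockColoring fun x : Fin p => (x : ℕ) / k) with ⟨f, hf, hred⟩ | ⟨g, hg, hblue⟩
  · have := hl.card_cover_le_of_blockColoring hk hf.injOn hred
    rw [hcover, card_univ] at this
    omega
  · have hB : IsBlue (blockColoring fun x : Fin p => (x : ℕ) / k) (univ.image g) := by
      intro t ht htr
      obtain ⟨s, -, rfl⟩ := subset_image_iff.1 ht
      rw [IsRedTriple, card_image_of_injective _ hg] at htr
      simp [hblue s htr.1] at htr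
    have := hB.card_le_of_blockColoring_div q
    rw [card_image_of_injective _ hg, card_univ, Fintype.card_fin] at this
    omega

end Ramsey

end HypertreeRamsey

open HypertreeRamsey

theorem stmt_17 (j n : ℕ) (hj : 2 ≤ j) {V : Type*} [Fintype V] [DecidableEq V]
    -- `T`: a 3-uniform tree on `2j+1` vertices:
    (l : List (Finset V)) (hl : IsTreeList 3 l) (hcover : l.foldr (· ∪ ·) ∅ = Finset.univ)
    (hm : Fintype.card V = 2 * j + 1) :
    (Odd n → 3 ≤ n → hRamsey {e | e ∈ l} 3 n = j * (n - 1) + 1) ∧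
    (Even n → 4 ≤ n →
      j * (n - 2) + 2 ≤ hRamsey {e | e ∈ l} 3 n ∧ hRamsey {e | e ∈ l} 3 n ≤ j * (n - 1)) := by
  have hcover' : cover l = Finset.univ := hcover
  have hlen : l.length = j := by
    have := hl.card_cover_add_length
    rw [hcover', Finset.card_univ, hm] at this
    omega
  have upper : ∀ p, j * (n - 1) + n % 2 ≤ p → RamseyArrows {e | e ∈ l} 3 n p := fun p hp =>
    ramseyArrows_of_le hl hcover' (by omega) (by rwa [hlen])
  have lower : ∀ q p, 2 * q + (p - 2 * j * q) < n → ¬ RamseyArrows {e | e ∈ l} 3 n p :=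
    fun q p hp => not_ramseyArrows hl hcover' (by omega) (by omega) hp
  refine ⟨fun ⟨q, hq⟩ _ => ?_, fun ⟨q, hq⟩ hn => ?_⟩
  · have hjq : j * (n - 1) = 2 * j * q := by rw [hq, Nat.add_sub_cancel]; ring
    rw [hjq] at upper ⊢
    exact le_antisymm (hRamsey_le (upper _ (by omega)))
      (le_hRamsey (upper _ le_rfl) fun p hp => lower q p (by omega))
  · obtain ⟨q, rfl⟩ : ∃ q', q = q' + 1 := ⟨q - 1, by omega⟩
    have hjq : j * (n - 2) = 2 * j * q := by
      rw [hq, show q + 1 + (q + 1) - 2 = 2 * q by omega]; ring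
    rw [hjq]
    exact ⟨le_hRamsey (upper _ le_rfl) fun p hp => lower q p (by omega),
      hRamsey_le (upper _ (by omega))⟩
end

section
/- For every j ≥ 1, the 3-uniform loose path P_{2j+1}^{(3)} satisfies R(P_{2j+1}^{(3)}, K_4^{(3)}; 3) = 2j + 2. -/
/-- The hyperedge set of the 3-uniform loose path `P_{2j+1}^{(3)}` with `j` hyperedges
on the vertices `0, 1, …, 2j`: the hyperedges are `{2i, 2i+1, 2i+2}` for `i < j`, so
consecutive hyperedges share exactly one vertex. -/
def loosePathE (j : ℕ) : Set (Finset ℕ) :=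
  {e | ∃ i < j, e = ({2 * i, 2 * i + 1, 2 * i + 2} : Finset ℕ)}

/-!
Lower bound: on `2j + 1` vertices colour a triple red iff it avoids a fixed vertex `z`. A red
copy of `P_{2j+1}^{(3)}` would span every vertex, `z` included, and every four vertices contain a
triple avoiding `z`.

Upper bound, by induction on `j`: a red loose path with `j` edges among `2j + 4` vertices leaves
three vertices `w, x, y` unused. A case analysis of the colours on `w, x, y` and an end edge
`{u, t, s}` of the path (`s` being shared with the next edge) yields a blue `K_4^{(3)}` or a red
two-edge loose path ending in `s` on four of `t, u, w, x, y`; this replaces the end edge and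
lengthens the path by one edge.
-/

section

variable {V : Type*} [DecidableEq V] (c : Finset V → Bool)

/-- Colour `true` is red: a red copy of `P_{2m+1}^{(3)}` is a `Nodup` list of length `2m + 1`
whose triples `l[2i], l[2i+1], l[2i+2]` are red. -/
def IsLooseChain : List V → Prop
  | [_] => True
  | a :: b :: d :: l => c {a, b, d} = true ∧ IsLooseChain (d :: l)
  | _ => False

def HasBlueK4 : Prop :=
  ∃ g : Fin 4 → V, Function.Injective g ∧
    ∀ e : Finset (Fin 4), e.card = 3 → c (e.image g) = false

variable {c}

theorem IsLooseChain.triple_eq_true {l : List V} (hl : IsLooseChain c l) (i : ℕ)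
    (hi : 2 * i + 2 < l.length) : c {l[2 * i], l[2 * i + 1], l[2 * i + 2]} = true := by
  induction i generalizing l with
  | zero =>
    match l, hl with
    | _ :: _ :: _ :: _, hl => exact hl.1
  | succ i ih =>
    match l, hl with
    | _ :: _ :: _ :: _, hl => exact ih hl.2 (by simp only [List.length_cons] at hi ⊢; omega)

theorem exists_injOn_of_isLooseChain {l : List V} (hl : IsLooseChain c l) (hnd : l.Nodup)
    {j : ℕ} (hlen : l.length = 2 * j + 1) :
    ∃ f : ℕ → V, Set.InjOn f ↑(Finset.range (2 * j + 1)) ∧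
      ∀ e ∈ loosePathE j, c (e.image f) = true := by
  obtain ⟨d, -⟩ := List.exists_mem_of_length_pos (l := l) (by omega)
  refine ⟨fun k => l.getD k d, fun k₁ hk₁ k₂ hk₂ h => ?_, ?_⟩
  · simp only [Finset.coe_range, Set.mem_Iio] at hk₁ hk₂
    simp only [List.getD_eq_getElem _ _ (hlen ▸ hk₁),
      List.getD_eq_getElem _ _ (hlen ▸ hk₂)] at h
    exact hnd.getElem_inj_iff.1 h
  · rintro _ ⟨i, hi, rfl⟩
    simp only [Finset.image_insert, Finset.image_singleton]
    rw [List.getD_eq_getElem _ _ (by omega), List.getD_eq_getElem _ _ (by omega),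
      List.getD_eq_getElem _ _ (by omega)]
    exact hl.triple_eq_true i (by omega)

theorem hasBlueK4_of_four {a b d e : V} (hnd : [a, b, d, e].Nodup)
    (habd : c {a, b, d} = false) (habe : c {a, b, e} = false) (hade : c {a, d, e} = false)
    (hbde : c {b, d, e} = false) : HasBlueK4 c := by
  have htriples : ∀ S : Finset (Fin 4), S.card = 3 →
      S = {0, 1, 2} ∨ S = {0, 1, 3} ∨ S = {0, 2, 3} ∨ S = {1, 2, 3} := by decide
  refine ⟨![a, b, d, e], fun i j hij => ?_, fun S hS => ?_⟩
  · simp only [List.nodup_cons, List.mem_cons, List.not_mem_nil] at hnd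
    fin_cases i <;> fin_cases j <;> simp_all
  · rcases htriples S hS with rfl | rfl | rfl | rfl <;> simpa

/- The wanted path is a red triple followed by a red triple through `s`. Any red triple on `t` or
`u` and two of `w, x, y` can be followed by `{t, u, s}`. If there is none, `{w, x, y}` is red (else
`{t, w, x, y}` is a blue `K_4`) and can be followed by any red `{s, t or u, one of w x y}`. If there
is none either, `{s, w, x}` and `{s, w, y}` are red (else `{s, t, w, x}` or `{s, t, w, y}` is a blue
`K_4`) and can follow `{t, u, x}` and `{t, u, y}` respectively; if both of these are blue,
`{t, u, x, y}` is a blue `K_4`. -/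
theorem hasBlueK4_or_exists_loose_extension {s t u w x y : V}
    (hnd : [s, t, u, w, x, y].Nodup) (hsut : c {u, t, s} = true) :
    HasBlueK4 c ∨ ∃ v₁ v₂ v₃ v₄,
      [v₁, v₂, v₃, v₄].Nodup ∧ [v₁, v₂, v₃, v₄] ⊆ [t, u, w, x, y] ∧
      c {v₁, v₂, v₃} = true ∧ c {v₃, v₄, s} = true := by
  have htus : c {t, u, s} = true := by convert hsut using 2; grind
  obtain h | htwx := (c {w, x, t}).eq_false_or_eq_true
  · exact .inr ⟨w, x, t, u, by grind, by simp, h, htus⟩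
  obtain h | htwy := (c {w, y, t}).eq_false_or_eq_true
  · exact .inr ⟨w, y, t, u, by grind, by simp, h, htus⟩
  obtain h | htxy := (c {x, y, t}).eq_false_or_eq_true
  · exact .inr ⟨x, y, t, u, by grind, by simp, h, htus⟩
  obtain h | huwx := (c {w, x, u}).eq_false_or_eq_true
  · exact .inr ⟨w, x, u, t, by grind, by simp, h, hsut⟩
  obtain h | huwy := (c {w, y, u}).eq_false_or_eq_true
  · exact .inr ⟨w, y, u, t, by grind, by simp, h, hsut⟩
  obtain h | huxy := (c {x, y, u}).eq_false_or_eq_true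
  · exact .inr ⟨x, y, u, t, by grind, by simp, h, hsut⟩
  obtain hwxy | hwxy := (c {w, x, y}).eq_false_or_eq_true
  · have hxyw : c {x, y, w} = true := by convert hwxy using 2; grind
    have hwyx : c {w, y, x} = true := by convert hwxy using 2; grind
    obtain h | hwts := (c {w, t, s}).eq_false_or_eq_true
    · exact .inr ⟨x, y, w, t, by grind, by simp, hxyw, h⟩
    obtain h | hxts := (c {x, t, s}).eq_false_or_eq_true
    · exact .inr ⟨w, y, x, t, by grind, by simp, hwyx, h⟩
    obtain h | hyts := (c {y, t, s}).eq_false_or_eq_true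
    · exact .inr ⟨w, x, y, t, by grind, by simp, hwxy, h⟩
    obtain h | hwus := (c {w, u, s}).eq_false_or_eq_true
    · exact .inr ⟨x, y, w, u, by grind, by simp, hxyw, h⟩
    obtain h | hxus := (c {x, u, s}).eq_false_or_eq_true
    · exact .inr ⟨w, y, x, u, by grind, by simp, hwyx, h⟩
    obtain h | hyus := (c {y, u, s}).eq_false_or_eq_true
    · exact .inr ⟨w, x, y, u, by grind, by simp, hwxy, h⟩
    obtain hwxs | hwxs := (c {w, x, s}).eq_false_or_eq_true
    · obtain h | htux := (c {t, u, x}).eq_false_or_eq_true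
      · exact .inr ⟨t, u, x, w, by grind, by simp, h, by convert hwxs using 2; grind⟩
      obtain hwys | hwys := (c {w, y, s}).eq_false_or_eq_true
      · obtain h | htuy := (c {t, u, y}).eq_false_or_eq_true
        · exact .inr ⟨t, u, y, w, by grind, by simp, h, by convert hwys using 2; grind⟩
        exact .inl (hasBlueK4_of_four (a := x) (b := y) (d := t) (e := u) (by grind) htxy huxy
          (by convert htux using 2; grind) (by convert htuy using 2; grind))
      exact .inl (hasBlueK4_of_four (a := w) (b := y) (d := t) (e := s) (by grind) htwy hwys
        hwts hyts)
    exact .inl (hasBlueK4_of_four (a := w) (b := x) (d := t) (e := s) (by grind) htwx hwxs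
      hwts hxts)
  exact .inl (hasBlueK4_of_four (a := w) (b := x) (d := y) (e := t) (by grind) hwxy htwx htwy htxy)

theorem exists_isLooseChain_or_hasBlueK4 [Fintype V] (c : Finset V → Bool) {m : ℕ}
    (hm : 1 ≤ m) (hV : 2 * m + 2 ≤ Fintype.card V) :
    (∃ l : List V, l.Nodup ∧ l.length = 2 * m + 1 ∧ IsLooseChain c l) ∨ HasBlueK4 c := by
  induction m, hm using Nat.le_induction with
  | base =>
    obtain ⟨g⟩ : Nonempty (Fin 4 ↪ V) :=
      Function.Embedding.nonempty_of_card_le (by simpa using hV)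
    by_cases hblue : ∀ e : Finset (Fin 4), e.card = 3 → c (e.image g) = false
    · exact .inr ⟨g, g.injective, hblue⟩
    obtain ⟨e, he, hred⟩ : ∃ e : Finset (Fin 4), e.card = 3 ∧ c (e.image g) = true := by
      simpa using hblue
    obtain ⟨a, b, d, hab, had, hbd, habd⟩ :=
      Finset.card_eq_three.1 ((Finset.card_image_of_injective e g.injective).trans he)
    exact .inl ⟨[a, b, d], by simp [*], rfl, by simpa [IsLooseChain, ← habd] using hred⟩
  | succ m hm ih =>
    obtain ⟨l, hnd, hlen, hl⟩ | hblue := ih (by omega)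
    · obtain ⟨w, hw, x, hx, y, hy, hwx, hwy, hxy⟩ := Finset.two_lt_card.1 (show
          2 < (Finset.univ \ l.toFinset).card by
        rw [Finset.card_sdiff_of_subset (Finset.subset_univ _), List.toFinset_card_of_nodup hnd,
          Finset.card_univ]
        omega)
      match l, hl with
      | u :: t :: s :: r, ⟨hsut, hr⟩ =>
        simp only [Finset.mem_sdiff, Finset.mem_univ, List.mem_toFinset, true_and] at hw hx hy
        rcases hasBlueK4_or_exists_loose_extension (w := w) (x := x) (y := y) (by grind) hsut with
          hblue | ⟨v₁, v₂, v₃, v₄, hv, hsub, h₁, h₂⟩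
        · exact .inr hblue
        · refine .inl ⟨v₁ :: v₂ :: v₃ :: v₄ :: s :: r, ?_, by simp at hlen ⊢; omega,
            h₁, h₂, hr⟩
          have hfresh : ∀ v ∈ [t, u, w, x, y], v ∉ s :: r := by grind
          exact List.nodup_append.2 ⟨hv, hnd.of_cons.of_cons, fun v hv' _ hv'' heq =>
            hfresh v (hsub hv') (heq ▸ hv'')⟩
      | [_], _ => simp at hlen; omega
    · exact .inr hblue

theorem exists_mem_loosePathE {j k : ℕ} (hj : 1 ≤ j) (hk : k < 2 * j + 1) :
    ∃ e ∈ loosePathE j, k ∈ e :=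
  ⟨_, ⟨min (k / 2) (j - 1), by omega, rfl⟩, by simp; omega⟩

theorem le_card_of_loosePath_avoiding [Fintype V] (z : V) {j : ℕ} (hj : 1 ≤ j) {f : ℕ → V}
    (hf : Set.InjOn f ↑(Finset.range (2 * j + 1)))
    (hz : ∀ e ∈ loosePathE j, z ∉ e.image f) :
    2 * j + 2 ≤ Fintype.card V := by
  have hsub : (Finset.range (2 * j + 1)).image f ⊆ Finset.univ.erase z := by
    simp only [Finset.subset_iff, Finset.mem_image, Finset.mem_range]
    rintro _ ⟨k, hk, rfl⟩
    obtain ⟨e, he, hke⟩ := exists_mem_loosePathE hj hk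
    exact Finset.mem_erase.2
      ⟨fun hkz => hz e he (hkz ▸ Finset.mem_image_of_mem f hke), Finset.mem_univ _⟩
  have hcard := Finset.card_le_card hsub
  rw [Finset.card_image_of_injOn hf, Finset.card_range,
    Finset.card_erase_of_mem (Finset.mem_univ _), Finset.card_univ] at hcard
  have := Fintype.card_pos_iff.2 ⟨z⟩
  omega

theorem not_hasBlueK4_avoiding (z : V) : ¬ HasBlueK4 (fun e => decide (z ∉ e)) := by
  rintro ⟨g, hg, hblue⟩
  have hz : ∀ e : Finset (Fin 4), e.card = 3 → ∃ i ∈ e, g i = z := fun e he => by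
    simpa using hblue e he
  obtain ⟨i, -, hi⟩ := hz {0, 1, 2} rfl
  obtain ⟨i', hi', hi'z⟩ := hz (Finset.univ.erase i) (by simp)
  exact Finset.ne_of_mem_erase hi' (hg (hi'z.trans hi.symm))

end

theorem stmt_18 (j : ℕ) (hj : 1 ≤ j) :
    hRamseyOn 3 (Finset.range (2 * j + 1)) (loosePathE j) 4 = 2 * j + 2 := by
  refine IsLeast.csInf_eq ⟨fun c => ?_, fun p hp => ?_⟩
  · obtain ⟨l, hnd, hlen, hl⟩ | hblue := exists_isLooseChain_or_hasBlueK4 c hj (by simp)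
    · exact .inl (exists_injOn_of_isLooseChain hl hnd hlen)
    · exact .inr hblue
  · have : NeZero p := ⟨by
      rintro rfl
      rcases hp (fun _ => true) with ⟨f, -⟩ | ⟨g, -⟩
      exacts [(f 0).elim0, (g 0).elim0]⟩
    rcases hp (fun e => decide (0 ∉ e)) with ⟨f, hf, hred⟩ | hblue
    · simpa using le_card_of_loosePath_avoiding 0 hj hf (by simpa using hred)
    · exact absurd hblue (not_hasBlueK4_avoiding 0)
end
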